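/- arXiv:2305.19145 — 4 statements merged into one kernel-verified Lean document; each statement's English description precedes it below -/
import Mathlib

section
/- Let B be the open unit ball in ℝⁿ and let f : ℝⁿ → ℝ be smooth on B. Suppose that Δf = c on B for some constant c ∈ ℝ, that |∇f(x)| ≤ 1 for all x ∈ B, and that |∇f(0)| = 1. Then f is affine on B; more precisely, f(x) = f(0) + ⟨∇f(0), x⟩ for all x ∈ B. -/
open RealInnerProductSpace

/-- The Euclidean Laplacian `Δf = Σᵢ ∂²f/∂xᵢ²`. -/
noncomputable def lap {n : ℕ} (f : EuclideanSpace ℝ (Fin n) → ℝ)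
    (x : EuclideanSpace ℝ (Fin n)) : ℝ :=
  ∑ i, fderiv ℝ (fun y => fderiv ℝ f y (EuclideanSpace.single i 1)) x (EuclideanSpace.single i 1)

open Filter Topology Metric RealInnerProductSpace

/-- 1-D second derivative test at a local min. -/
lemma second_deriv_nonneg_of_isLocalMin {g : ℝ → ℝ}
    (hg : ∀ᶠ t in 𝓝 (0:ℝ), DifferentiableAt ℝ g t)
    (hg' : DifferentiableAt ℝ (deriv g) 0) (hmin : IsLocalMin g 0) :
    0 ≤ deriv (deriv g) 0 := by
  by_contra hlt
  push_neg at hlt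
  have hd0 : deriv g 0 = 0 := hmin.deriv_eq_zero
  have hslope : Tendsto (slope (deriv g) 0) (𝓝[≠] 0) (𝓝 (deriv (deriv g) 0)) :=
    hasDerivAt_iff_tendsto_slope.1 hg'.hasDerivAt
  have hneg : ∀ᶠ t in 𝓝[>] (0:ℝ), deriv g t < 0 := by
    have h1 : Tendsto (slope (deriv g) 0) (𝓝[>] 0) (𝓝 (deriv (deriv g) 0)) :=
      hslope.mono_left (nhdsWithin_mono _ (fun t ht => ne_of_gt ht))
    have h2 : ∀ᶠ t in 𝓝[>] (0:ℝ), slope (deriv g) 0 t < 0 :=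
      h1.eventually_lt_const hlt
    filter_upwards [h2, self_mem_nhdsWithin] with t ht ht'
    have hs : slope (deriv g) 0 t = deriv g t / t := by
      simp [slope, hd0, div_eq_inv_mul]
    rw [hs] at ht
    have htpos : (0:ℝ) < t := ht'
    have hh : deriv g t = (deriv g t / t) * t := (div_mul_cancel₀ _ (ne_of_gt htpos)).symm
    nlinarith
  -- get δ₁ for hneg
  obtain ⟨δ₁, hδ₁, hδ₁'⟩ := (nhdsGT_basis (0:ℝ)).eventually_iff.mp hneg
  -- get δ₂ for hg ∧ hmin
  obtain ⟨δ₂, hδ₂, hδ₂'⟩ := Metric.eventually_nhds_iff_ball.mp (hg.and hmin)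
  set δ := min δ₁ δ₂ / 2 with hδdef
  have hδpos : 0 < δ := by positivity
  have hδ1 : δ < δ₁ := by
    have : δ ≤ δ₁ / 2 := by
      apply div_le_div_of_nonneg_right (min_le_left _ _) <;> norm_num
    linarith
  have hδ2 : δ < δ₂ := by
    have : δ ≤ δ₂ / 2 := by
      apply div_le_div_of_nonneg_right (min_le_right _ _) <;> norm_num
    linarith
  have hanti : StrictAntiOn g (Set.Icc 0 δ) := by
    apply strictAntiOn_of_deriv_neg (convex_Icc _ _)
    · intro t ht
      have : t ∈ Metric.ball (0:ℝ) δ₂ := by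
        simp only [Metric.mem_ball, Real.dist_eq, sub_zero]
        rw [abs_of_nonneg ht.1]
        linarith [ht.2]
      exact ((hδ₂' t this).1).continuousAt.continuousWithinAt
    · intro t ht
      rw [interior_Icc] at ht
      exact hδ₁' ⟨ht.1, by linarith [ht.2]⟩
  have h1 : g δ < g 0 := hanti (by simp [le_of_lt hδpos]) (by simp [le_of_lt hδpos]) hδpos
  have h2 : g 0 ≤ g δ := by
    have : δ ∈ Metric.ball (0:ℝ) δ₂ := by
      simp only [Metric.mem_ball, Real.dist_eq, sub_zero]
      rw [abs_of_nonneg (le_of_lt hδpos)]; exact hδ2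
    exact (hδ₂' δ this).2
  linarith

section aux
variable {n : ℕ}

/-- second derivative along a line -/
lemma deriv2_line {u : EuclideanSpace ℝ (Fin n) → ℝ} {U : Set (EuclideanSpace ℝ (Fin n))}
    (hU : IsOpen U) (hu : ContDiffOn ℝ (⊤:ℕ∞) u U) {x : EuclideanSpace ℝ (Fin n)} (hx : x ∈ U)
    (e : EuclideanSpace ℝ (Fin n)) :
    fderiv ℝ (fun y => fderiv ℝ u y e) x e = deriv (deriv (fun t : ℝ => u (x + t • e))) 0 := by
  have hud : DifferentiableOn ℝ u U := hu.differentiableOn (by simp)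
  have hF : ContDiffOn ℝ (⊤:ℕ∞) (fderiv ℝ u) U := hu.fderiv_of_isOpen hU (by exact_mod_cast le_top)
  have hF1 : ContDiffOn ℝ (⊤:ℕ∞) (fun y => fderiv ℝ u y e) U := hF.clm_apply contDiffOn_const
  have hL : ∀ t : ℝ, HasDerivAt (fun s : ℝ => x + s • e) e t := by
    intro t
    simpa using ((hasDerivAt_id t).smul_const e).const_add x
  have hLc : Continuous (fun s : ℝ => x + s • e) := by continuity
  have hS : IsOpen ((fun s : ℝ => x + s • e) ⁻¹' U) := hU.preimage hLc
  have h0S : (0:ℝ) ∈ (fun s : ℝ => x + s • e) ⁻¹' U := by simp [hx]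
  have hstep : ∀ t ∈ (fun s : ℝ => x + s • e) ⁻¹' U,
      HasDerivAt (fun s : ℝ => u (x + s • e)) (fderiv ℝ u (x + t • e) e) t := by
    intro t ht
    have hdiff : DifferentiableAt ℝ u (x + t • e) :=
      hud.differentiableAt (hU.mem_nhds ht)
    exact (hdiff.hasFDerivAt.comp_hasDerivAt t (hL t))
  have hev : deriv (fun s : ℝ => u (x + s • e)) =ᶠ[𝓝 (0:ℝ)]
      (fun s : ℝ => fderiv ℝ u (x + s • e) e) := by
    filter_upwards [hS.mem_nhds h0S] with t ht
    exact (hstep t ht).deriv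
  rw [hev.deriv_eq]
  have hdF1 : DifferentiableAt ℝ (fun y => fderiv ℝ u y e) x :=
    (hF1.differentiableOn (by simp)).differentiableAt (hU.mem_nhds hx)
  have h00 : x + (0:ℝ) • e = x := by simp
  rw [← h00] at hdF1
  have : HasDerivAt (fun s : ℝ => fderiv ℝ u (x + s • e) e)
      (fderiv ℝ (fun y => fderiv ℝ u y e) (x + (0:ℝ) • e) e) 0 :=
    HasFDerivAt.comp_hasDerivAt (l := fun y => fderiv ℝ u y e) 0 hdF1.hasFDerivAt (hL 0)
  rw [h00] at this
  exact this.deriv.symm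

/-- at an interior local min the Laplacian is nonneg. -/
lemma lap_nonneg_of_isLocalMin {u : EuclideanSpace ℝ (Fin n) → ℝ}
    {U : Set (EuclideanSpace ℝ (Fin n))}
    (hU : IsOpen U) (hu : ContDiffOn ℝ (⊤:ℕ∞) u U) {x : EuclideanSpace ℝ (Fin n)} (hx : x ∈ U)
    (hmin : IsLocalMin u x) : 0 ≤ lap u x := by
  have hud : DifferentiableOn ℝ u U := hu.differentiableOn (by simp)
  have hF : ContDiffOn ℝ (⊤:ℕ∞) (fderiv ℝ u) U := hu.fderiv_of_isOpen hU (by exact_mod_cast le_top)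
  apply Finset.sum_nonneg
  intro i _
  set e := EuclideanSpace.single (𝕜 := ℝ) i (1:ℝ) with he
  rw [deriv2_line hU hu hx e]
  set g : ℝ → ℝ := fun t => u (x + t • e) with hgdef
  have hL : ∀ t : ℝ, HasDerivAt (fun s : ℝ => x + s • e) e t := by
    intro t
    simpa using ((hasDerivAt_id t).smul_const e).const_add x
  have hLc : Continuous (fun s : ℝ => x + s • e) := by continuity
  have hS : IsOpen ((fun s : ℝ => x + s • e) ⁻¹' U) := hU.preimage hLc
  have h0S : (0:ℝ) ∈ (fun s : ℝ => x + s • e) ⁻¹' U := by simp [hx]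
  apply second_deriv_nonneg_of_isLocalMin
  · filter_upwards [hS.mem_nhds h0S] with t ht
    have hdiff : DifferentiableAt ℝ u (x + t • e) := hud.differentiableAt (hU.mem_nhds ht)
    exact (hdiff.hasFDerivAt.comp_hasDerivAt t (hL t)).differentiableAt
  · -- deriv g differentiable at 0
    have hstep : ∀ t ∈ (fun s : ℝ => x + s • e) ⁻¹' U,
        HasDerivAt g (fderiv ℝ u (x + t • e) e) t := by
      intro t ht
      have hdiff : DifferentiableAt ℝ u (x + t • e) := hud.differentiableAt (hU.mem_nhds ht)
      exact (hdiff.hasFDerivAt.comp_hasDerivAt t (hL t))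
    have hev : (fun s : ℝ => fderiv ℝ u (x + s • e) e) =ᶠ[𝓝 (0:ℝ)] deriv g := by
      filter_upwards [hS.mem_nhds h0S] with t ht
      exact (hstep t ht).deriv.symm
    have hF1 : ContDiffOn ℝ (⊤:ℕ∞) (fun y => fderiv ℝ u y e) U := hF.clm_apply contDiffOn_const
    have hdF1 : DifferentiableAt ℝ (fun y => fderiv ℝ u y e) x :=
      (hF1.differentiableOn (by simp)).differentiableAt (hU.mem_nhds hx)
    have h00 : x + (0:ℝ) • e = x := by simp
    rw [← h00] at hdF1
    have : DifferentiableAt ℝ (fun s : ℝ => fderiv ℝ u (x + s • e) e) 0 :=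
      (HasFDerivAt.comp_hasDerivAt (l := fun y => fderiv ℝ u y e) 0 hdF1.hasFDerivAt (hL 0)).differentiableAt
    exact (hev.differentiableAt_iff).mp this
  · -- local min of g at 0
    have h0 : (fun s : ℝ => x + s • e) 0 = x := by simp
    have hmin' : IsMinFilter u (𝓝 ((fun s : ℝ => x + s • e) 0)) ((fun s : ℝ => x + s • e) 0) := by
      rw [h0]; exact hmin
    have hc : Filter.Tendsto (fun s : ℝ => x + s • e) (𝓝 0) (𝓝 ((fun s : ℝ => x + s • e) 0)) :=
      hLc.continuousAt
    have := IsMinFilter.comp_tendsto (g := fun s : ℝ => x + s • e) (b := (0:ℝ)) hmin' hc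
    exact this



open Filter Topology Metric

variable {n : ℕ}

lemma diff_dirderiv {u : EuclideanSpace ℝ (Fin n) → ℝ} {U : Set (EuclideanSpace ℝ (Fin n))}
    (hU : IsOpen U) (hu : ContDiffOn ℝ (⊤:ℕ∞) u U) {x : EuclideanSpace ℝ (Fin n)} (hx : x ∈ U)
    (e : EuclideanSpace ℝ (Fin n)) :
    DifferentiableAt ℝ (fun y => fderiv ℝ u y e) x := by
  have hF : ContDiffOn ℝ (⊤:ℕ∞) (fderiv ℝ u) U := hu.fderiv_of_isOpen hU (by exact_mod_cast le_top)
  have hF1 : ContDiffOn ℝ (⊤:ℕ∞) (fun y => fderiv ℝ u y e) U := hF.clm_apply contDiffOn_const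
  exact (hF1.differentiableOn (by simp)).differentiableAt (hU.mem_nhds hx)

lemma lap_smul_add {u v : EuclideanSpace ℝ (Fin n) → ℝ} {U : Set (EuclideanSpace ℝ (Fin n))}
    (hU : IsOpen U) (hu : ContDiffOn ℝ (⊤:ℕ∞) u U) (hv : ContDiffOn ℝ (⊤:ℕ∞) v U)
    (a b : ℝ) {x : EuclideanSpace ℝ (Fin n)} (hx : x ∈ U) :
    lap (fun y => a * u y + b * v y) x = a * lap u x + b * lap v x := by
  have hud : DifferentiableOn ℝ u U := hu.differentiableOn (by simp)
  have hvd : DifferentiableOn ℝ v U := hv.differentiableOn (by simp)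
  have key : ∀ e : EuclideanSpace ℝ (Fin n),
      fderiv ℝ (fun y => fderiv ℝ (fun z => a * u z + b * v z) y e) x e
      = a * fderiv ℝ (fun y => fderiv ℝ u y e) x e + b * fderiv ℝ (fun y => fderiv ℝ v y e) x e := by
    intro e
    have hev : (fun y => fderiv ℝ (fun z => a * u z + b * v z) y e) =ᶠ[𝓝 x]
        (fun y => a * fderiv ℝ u y e + b * fderiv ℝ v y e) := by
      filter_upwards [hU.mem_nhds hx] with y hy
      have hu' : HasFDerivAt u (fderiv ℝ u y) y :=
        (hud.differentiableAt (hU.mem_nhds hy)).hasFDerivAt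
      have hv' : HasFDerivAt v (fderiv ℝ v y) y :=
        (hvd.differentiableAt (hU.mem_nhds hy)).hasFDerivAt
      have : HasFDerivAt (fun z => a * u z + b * v z)
          (a • fderiv ℝ u y + b • fderiv ℝ v y) y :=
        (hu'.const_mul a).add (hv'.const_mul b)
      rw [this.fderiv]
      simp
    rw [hev.fderiv_eq]
    have h1 := diff_dirderiv hU hu hx e
    have h2 := diff_dirderiv hU hv hx e
    have : HasFDerivAt (fun y => a * fderiv ℝ u y e + b * fderiv ℝ v y e)
        (a • fderiv ℝ (fun y => fderiv ℝ u y e) x + b • fderiv ℝ (fun y => fderiv ℝ v y e) x) x :=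
      (h1.hasFDerivAt.const_mul a).add (h2.hasFDerivAt.const_mul b)
    rw [this.fderiv]
    simp
  simp only [lap, key]
  rw [Finset.sum_add_distrib, Finset.mul_sum, Finset.mul_sum]

lemma lap_congr_nhds {u v : EuclideanSpace ℝ (Fin n) → ℝ} {x : EuclideanSpace ℝ (Fin n)}
    (h : u =ᶠ[𝓝 x] v) : lap u x = lap v x := by
  unfold lap
  apply Finset.sum_congr rfl
  intro i _
  have : (fun y => fderiv ℝ u y (EuclideanSpace.single i 1)) =ᶠ[𝓝 x]
      (fun y => fderiv ℝ v y (EuclideanSpace.single i 1)) := by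
    have h' : ∀ᶠ y in 𝓝 x, u =ᶠ[𝓝 y] v := h.eventually_nhds
    filter_upwards [h'] with y hy
    rw [hy.fderiv_eq]
  rw [this.fderiv_eq]

open Filter Topology Metric RealInnerProductSpace

lemma sum_sq_coords {n : ℕ} (z : EuclideanSpace ℝ (Fin n)) : ∑ i, (z i)^2 = ‖z‖^2 := by
  rw [EuclideanSpace.norm_eq, Real.sq_sqrt (by positivity)]
  apply Finset.sum_congr rfl
  intro i _
  rw [Real.norm_eq_abs, sq_abs]

lemma barrier_contDiff {n : ℕ} (p : EuclideanSpace ℝ (Fin n)) (α C : ℝ) :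
    ContDiff ℝ (⊤:ℕ∞) (fun y : EuclideanSpace ℝ (Fin n) => Real.exp (-α * ‖y - p‖^2) - C) := by
  apply ContDiff.sub _ contDiff_const
  apply Real.contDiff_exp.comp
  exact contDiff_const.mul ((contDiff_norm_sq ℝ).comp (contDiff_id.sub contDiff_const))

lemma lap_barrier {n : ℕ} (p : EuclideanSpace ℝ (Fin n)) (α C : ℝ)
    (x : EuclideanSpace ℝ (Fin n)) :
    lap (fun y => Real.exp (-α * ‖y - p‖^2) - C) x
      = Real.exp (-α * ‖x - p‖^2) * (4*α^2*‖x - p‖^2 - 2*α*n) := by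
  have hψ : ContDiffOn ℝ (⊤:ℕ∞) (fun y : EuclideanSpace ℝ (Fin n) =>
      Real.exp (-α * ‖y - p‖^2) - C) Set.univ := (barrier_contDiff p α C).contDiffOn
  have key : ∀ i : Fin n,
      fderiv ℝ (fun y => fderiv ℝ (fun z : EuclideanSpace ℝ (Fin n) =>
        Real.exp (-α * ‖z - p‖^2) - C) y (EuclideanSpace.single i 1)) x (EuclideanSpace.single i 1)
      = Real.exp (-α * ‖x - p‖^2) * (4*α^2*((x - p) i)^2 - 2*α) := by
    intro i
    set e := EuclideanSpace.single (𝕜 := ℝ) i (1:ℝ) with he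
    rw [deriv2_line isOpen_univ hψ (Set.mem_univ x) e]
    set Q := ‖x - p‖^2 with hQ
    set b := (x - p) i with hb
    have hline : (fun t : ℝ => Real.exp (-α * ‖(x + t • e) - p‖^2) - C)
        = fun t : ℝ => Real.exp (-α * (Q + 2*b*t + t^2)) - C := by
      funext t
      congr 2
      have : (x + t • e) - p = (x - p) + t • e := by abel
      rw [this, norm_add_sq_real]
      have h1 : ⟪x - p, t • e⟫ = t * b := by
        rw [real_inner_smul_right]
        congr 1
        rw [he, EuclideanSpace.inner_single_right]
        simp [hb]
      have h2 : ‖t • e‖^2 = t^2 := by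
        rw [norm_smul, he, EuclideanSpace.norm_single]
        simp [mul_pow, sq_abs]
      rw [h1, h2]
      ring
    rw [hline]
    have hP : ∀ t : ℝ, HasDerivAt (fun t : ℝ => -α * (Q + 2*b*t + t^2)) (-α * (2*b + 2*t)) t := by
      intro t
      have h1 : HasDerivAt (fun t : ℝ => Q + 2*b*t + t^2) (2*b + 2*t) t := by
        have := (((hasDerivAt_id t).const_mul (2*b)).const_add Q).fun_add (hasDerivAt_pow 2 t)
        simpa [mul_comm] using this
      exact h1.const_mul (-α)
    have hderiv1 : deriv (fun t : ℝ => Real.exp (-α * (Q + 2*b*t + t^2)) - C)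
        = fun t : ℝ => Real.exp (-α * (Q + 2*b*t + t^2)) * (-α * (2*b + 2*t)) := by
      funext t
      exact (((hP t).exp).sub_const C).deriv
    rw [hderiv1]
    have hg : HasDerivAt (fun t : ℝ => -α * (2*b + 2*t)) (-α * 2) 0 := by
      have : HasDerivAt (fun t : ℝ => 2*b + 2*t) 2 0 := by
        simpa using ((hasDerivAt_id (0:ℝ)).const_mul 2).const_add (2*b)
      exact this.const_mul (-α)
    have hprod := ((hP 0).exp).fun_mul hg
    rw [hprod.deriv]
    simp only [mul_zero, add_zero]
    ring_nf
  unfold lap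
  rw [Finset.sum_congr rfl (fun i _ => key i)]
  rw [← Finset.mul_sum]
  have : ∑ i, (4*α^2*((x - p) i)^2 - 2*α) = 4*α^2*‖x - p‖^2 - 2*α*n := by
    rw [Finset.sum_sub_distrib]
    simp only [Finset.sum_const, Finset.card_univ, Fintype.card_fin, nsmul_eq_mul]
    rw [← Finset.mul_sum, sum_sq_coords]
    ring
  rw [this]

open Filter Topology Metric RealInnerProductSpace

section harm
variable {n : ℕ}
local notation "Esp" => EuclideanSpace ℝ (Fin n)

lemma lap_dirderiv_eq_zero {f : EuclideanSpace ℝ (Fin n) → ℝ}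
    {U : Set (EuclideanSpace ℝ (Fin n))} (hU : IsOpen U) (hf : ContDiffOn ℝ (⊤:ℕ∞) f U)
    {c : ℝ} (hlapf : ∀ x ∈ U, lap f x = c) (v : EuclideanSpace ℝ (Fin n))
    {x : EuclideanSpace ℝ (Fin n)} (hx : x ∈ U) :
    lap (fun y => fderiv ℝ f y v) x = 0 := by
  set F : Esp → (Esp →L[ℝ] ℝ) := fderiv ℝ f with hFdef
  set F2 : Esp → (Esp →L[ℝ] Esp →L[ℝ] ℝ) := fderiv ℝ F with hF2def
  have hF : ContDiffOn ℝ (⊤:ℕ∞) F U := hf.fderiv_of_isOpen (m := (⊤:ℕ∞)) hU (by exact_mod_cast le_top)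
  have hF2 : ContDiffOn ℝ (⊤:ℕ∞) F2 U := hF.fderiv_of_isOpen (m := (⊤:ℕ∞)) hU (by exact_mod_cast le_top)
  have hFd : ∀ y ∈ U, HasFDerivAt f (F y) y := fun y hy =>
    ((hf.differentiableOn (by simp)).differentiableAt (hU.mem_nhds hy)).hasFDerivAt
  have hF2d : ∀ y ∈ U, HasFDerivAt F (F2 y) y := fun y hy =>
    ((hF.differentiableOn (by simp)).differentiableAt (hU.mem_nhds hy)).hasFDerivAt
  set F3 : Esp →L[ℝ] Esp →L[ℝ] Esp →L[ℝ] ℝ := fderiv ℝ F2 x with hF3def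
  have hF3d : HasFDerivAt F2 F3 x :=
    ((hF2.differentiableOn (by simp)).differentiableAt (hU.mem_nhds hx)).hasFDerivAt
  have symm2 : ∀ y ∈ U, ∀ a b : Esp, F2 y a b = F2 y b a := by
    intro y hy a b
    have hev : ∀ᶠ z in 𝓝 y, HasFDerivAt f (F z) z := by
      filter_upwards [hU.mem_nhds hy] with z hz; exact hFd z hz
    exact second_derivative_symmetric_of_eventually hev (hF2d y hy) a b
  have symm3 : ∀ a b : Esp, F3 a b = F3 b a := by
    intro a b
    have hev : ∀ᶠ z in 𝓝 x, HasFDerivAt F (F2 z) z := by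
      filter_upwards [hU.mem_nhds hx] with z hz; exact hF2d z hz
    exact second_derivative_symmetric_of_eventually hev hF3d a b
  have happ : ∀ (w : Esp), ∀ y ∈ U,
      HasFDerivAt (fun z => F z w) ((F2 y).flip w) y := by
    intro w y hy
    have := (hF2d y hy).clm_apply (hasFDerivAt_const w y)
    simpa using this
  have happ2 : ∀ (a b : Esp),
      HasFDerivAt (fun y => F2 y a b) ((F3.flip a).flip b) x := by
    intro a b
    have h1 : HasFDerivAt (fun y => F2 y a) (F3.flip a) x := by
      have := hF3d.clm_apply (hasFDerivAt_const a x)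
      simpa using this
    have := h1.clm_apply (hasFDerivAt_const b x)
    simpa using this
  have term_eq : ∀ i : Fin n,
      fderiv ℝ (fun y => fderiv ℝ (fun z => fderiv ℝ f z v) y (EuclideanSpace.single i 1)) x
        (EuclideanSpace.single i 1)
      = F3 v (EuclideanSpace.single i 1) (EuclideanSpace.single i 1) := by
    intro i
    set e : Esp := EuclideanSpace.single (𝕜 := ℝ) i (1:ℝ)
    have hev : (fun y => fderiv ℝ (fun z => fderiv ℝ f z v) y e) =ᶠ[𝓝 x]
        (fun y => F2 y v e) := by
      filter_upwards [hU.mem_nhds hx] with y hy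
      have h1 : fderiv ℝ (fun z => F z v) y = (F2 y).flip v := (happ v y hy).fderiv
      show fderiv ℝ (fun z => F z v) y e = F2 y v e
      rw [h1, ContinuousLinearMap.flip_apply]
      exact symm2 y hy e v
    rw [hev.fderiv_eq, (happ2 v e).fderiv, ContinuousLinearMap.flip_apply,
      ContinuousLinearMap.flip_apply]
    exact congrFun (congrArg _ (symm3 e v)) e
  have hLf : ∀ y ∈ U, ∑ i, F2 y (EuclideanSpace.single i 1) (EuclideanSpace.single i 1) = c := by
    intro y hy
    rw [← hlapf y hy]
    unfold lap
    apply Finset.sum_congr rfl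
    intro i _
    show F2 y _ _ = fderiv ℝ (fun z => F z _) y _
    rw [(happ _ y hy).fderiv, ContinuousLinearMap.flip_apply]
  have hsum : ∑ i, F3 v (EuclideanSpace.single i 1) (EuclideanSpace.single i 1) = 0 := by
    have hLfd : HasFDerivAt (fun y => ∑ i, F2 y (EuclideanSpace.single i 1)
        (EuclideanSpace.single i 1))
        (∑ i : Fin n, ((F3.flip (EuclideanSpace.single i 1)).flip (EuclideanSpace.single i 1))) x :=
      HasFDerivAt.fun_sum (fun i _ => happ2 _ _)
    have hconst : (fun y => ∑ i, F2 y (EuclideanSpace.single i 1) (EuclideanSpace.single i 1))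
        =ᶠ[𝓝 x] (fun _ => c) := by
      filter_upwards [hU.mem_nhds hx] with y hy
      exact hLf y hy
    have h0 : fderiv ℝ (fun y => ∑ i, F2 y (EuclideanSpace.single i 1)
        (EuclideanSpace.single i 1)) x = 0 := by
      rw [hconst.fderiv_eq]
      exact fderiv_const_apply c
    rw [hLfd.fderiv] at h0
    have := congrArg (fun (T : Esp →L[ℝ] ℝ) => T v) h0
    simpa using this
  unfold lap
  rw [Finset.sum_congr rfl (fun i _ => term_eq i)]
  exact hsum

end harm

open Filter Topology Metric

lemma deriv_le_deriv_of_le {φ β : ℝ → ℝ} {a b δ : ℝ} (hδ : 0 < δ) (h0 : φ 0 = β 0)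
    (hge : ∀ t ∈ Set.Ioc (0:ℝ) δ, β t ≤ φ t)
    (hφ : HasDerivAt φ a 0) (hβ : HasDerivAt β b 0) : b ≤ a := by
  have hφs : Tendsto (slope φ 0) (𝓝[>] 0) (𝓝 a) :=
    (hasDerivAt_iff_tendsto_slope.1 hφ).mono_left (nhdsWithin_mono _ (fun t ht => ne_of_gt ht))
  have hβs : Tendsto (slope β 0) (𝓝[>] 0) (𝓝 b) :=
    (hasDerivAt_iff_tendsto_slope.1 hβ).mono_left (nhdsWithin_mono _ (fun t ht => ne_of_gt ht))
  apply le_of_tendsto_of_tendsto hβs hφs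
  filter_upwards [Ioc_mem_nhdsGT hδ] with t ht
  have htpos : (0:ℝ) < t := ht.1
  simp only [slope_def_field, div_eq_inv_mul]
  rw [sub_zero]
  have h1 : β t - β 0 ≤ φ t - φ 0 := by
    rw [h0]
    exact sub_le_sub_right (hge t ht) _
  exact mul_le_mul_of_nonneg_left h1 (inv_nonneg.mpr htpos.le)

section smp
open Filter Topology Metric
variable {n : ℕ}

set_option maxHeartbeats 2000000 in
lemma strong_min_principle (hn : 0 < n) {w : EuclideanSpace ℝ (Fin n) → ℝ}
    (hw : ContDiffOn ℝ (⊤:ℕ∞) w (Metric.ball 0 1))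
    (hharm : ∀ x ∈ Metric.ball (0:EuclideanSpace ℝ (Fin n)) 1, lap w x = 0)
    (hpos : ∀ x ∈ Metric.ball (0:EuclideanSpace ℝ (Fin n)) 1, 0 ≤ w x)
    (h00 : w (0:EuclideanSpace ℝ (Fin n)) = 0) :
    ∀ x ∈ Metric.ball (0:EuclideanSpace ℝ (Fin n)) 1, w x = 0 := by
  haveI : Nontrivial (EuclideanSpace ℝ (Fin n)) := by
    refine ⟨EuclideanSpace.single ⟨0, hn⟩ 1, 0, fun h => ?_⟩
    have := congrArg (fun v => v ⟨0, hn⟩) h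
    simp [EuclideanSpace.single_apply] at this
  set U : Set (EuclideanSpace ℝ (Fin n)) := Metric.ball 0 1 with hUdef
  have hUopen : IsOpen U := isOpen_ball
  have h0U : (0:EuclideanSpace ℝ (Fin n)) ∈ U := mem_ball_self one_pos
  have hwc : ContinuousOn w U := hw.continuousOn
  by_contra hcon
  push_neg at hcon
  obtain ⟨x₀, hx₀U, hx₀⟩ := hcon
  set P : Set (EuclideanSpace ℝ (Fin n)) := U ∩ w ⁻¹' (Set.Ioi 0) with hPdef
  have hPopen : IsOpen P := hwc.isOpen_inter_preimage hUopen isOpen_Ioi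
  have hx₀P : x₀ ∈ P := ⟨hx₀U, lt_of_le_of_ne (hpos _ hx₀U) (Ne.symm hx₀)⟩
  have hPsub : P ⊆ U := Set.inter_subset_left
  -- find a zero of w in the closure of P
  obtain ⟨z, hzU, hwz, hzcl⟩ : ∃ z ∈ U, w z = 0 ∧ z ∈ closure P := by
    by_contra hno
    push_neg at hno
    have hsub : closure P ∩ U ⊆ P := by
      rintro y ⟨hyc, hyU⟩
      rcases lt_or_eq_of_le (hpos y hyU) with h | h
      · exact ⟨hyU, h⟩
      · exact absurd hyc (hno y hyU h.symm)
    have hUP : U ⊆ P :=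
      ((convex_ball (0:EuclideanSpace ℝ (Fin n)) 1).isPreconnected).subset_of_closure_inter_subset
        hPopen ⟨x₀, hx₀U, hx₀P⟩ hsub
    have := (hUP h0U).2
    simp only [Set.mem_preimage, Set.mem_Ioi, h00] at this
    exact lt_irrefl 0 this
  set d : ℝ := (1 - ‖z‖)/4 with hddef
  have hznorm : ‖z‖ < 1 := mem_ball_zero_iff.mp hzU
  have hd : 0 < d := by simp only [hddef]; linarith
  have hgeo : ∀ y : EuclideanSpace ℝ (Fin n), dist y z ≤ 2*d → y ∈ U := by
    intro y hy
    rw [hUdef, mem_ball_zero_iff]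
    have h1 : ‖y‖ ≤ ‖y - z‖ + ‖z‖ := by
      have := norm_add_le (y - z) z
      simpa using this
    rw [← dist_eq_norm] at h1
    simp only [hddef] at hy
    linarith
  obtain ⟨p, hpP, hpz⟩ : ∃ p ∈ P, dist p z < d := by
    obtain ⟨p, hp, hdist⟩ := Metric.mem_closure_iff.mp hzcl d hd
    exact ⟨p, hp, by rwa [dist_comm]⟩
  have hwp : 0 < w p := hpP.2
  -- the zero set near p
  set Zc : Set (EuclideanSpace ℝ (Fin n)) := Metric.closedBall p d ∩ w ⁻¹' {0} with hZcdef
  have hcbU : Metric.closedBall p d ⊆ U := by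
    intro y hy
    apply hgeo
    calc dist y z ≤ dist y p + dist p z := dist_triangle _ _ _
    _ ≤ d + d := add_le_add (mem_closedBall.mp hy) hpz.le
    _ = 2*d := by ring
  have hZcclosed : IsClosed Zc :=
    ContinuousOn.preimage_isClosed_of_isClosed (hwc.mono hcbU) Metric.isClosed_closedBall
      isClosed_singleton
  have hZccpt : IsCompact Zc :=
    Metric.isCompact_of_isClosed_isBounded hZcclosed
      (Metric.isBounded_closedBall.subset Set.inter_subset_left)
  have hzZc : z ∈ Zc := ⟨mem_closedBall.mpr (by rw [dist_comm]; exact hpz.le), hwz⟩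
  obtain ⟨q, hqZc, hqmin⟩ := hZccpt.exists_isMinOn ⟨z, hzZc⟩
    ((continuous_const.dist continuous_id).continuousOn (s := Zc))
  set R : ℝ := dist p q with hRdef
  have hwq : w q = 0 := hqZc.2
  have hqU : q ∈ U := hcbU hqZc.1
  have hRd : R < d := lt_of_le_of_lt (isMinOn_iff.mp hqmin z hzZc) hpz
  have hRpos : 0 < R := by
    rw [hRdef, dist_pos]
    intro h
    rw [h, hwq] at hwp
    exact lt_irrefl 0 hwp
  have hcbRU : Metric.closedBall p R ⊆ U := by
    intro y hy
    apply hgeo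
    calc dist y z ≤ dist y p + dist p z := dist_triangle _ _ _
    _ ≤ R + d := add_le_add (mem_closedBall.mp hy) hpz.le
    _ ≤ 2*d := by linarith
  have hballP : Metric.ball p R ⊆ P := by
    intro y hy
    have hyU : y ∈ U := hcbRU (ball_subset_closedBall hy)
    refine ⟨hyU, ?_⟩
    rcases lt_or_eq_of_le (hpos y hyU) with h | h
    · exact h
    · exfalso
      have h2 : dist p y < R := by rw [dist_comm]; exact mem_ball.mp hy
      have h2' : dist y p < R := mem_ball.mp hy
      have hyZc : y ∈ Zc := ⟨mem_closedBall.mpr (le_of_lt (lt_trans h2' hRd)), h.symm⟩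
      have h3 := isMinOn_iff.mp hqmin y hyZc
      simp only [id_eq] at h3
      rw [← hRdef] at h3
      linarith
  -- barrier setup
  set α : ℝ := (2*n+1)/R^2 with hαdef
  have hα : 0 < α := by rw [hαdef]; positivity
  have hαR : α * R^2 = 2*n+1 := by rw [hαdef]; field_simp
  set C : ℝ := Real.exp (-α * R^2) with hCdef
  have hC : 0 < C := Real.exp_pos _
  set ψ : EuclideanSpace ℝ (Fin n) → ℝ := fun y => Real.exp (-α * ‖y - p‖^2) - C with hψdef
  have hψcd : ContDiff ℝ (⊤:ℕ∞) ψ := barrier_contDiff p α C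
  have hψle : ∀ y : EuclideanSpace ℝ (Fin n), ψ y ≤ 1 := by
    intro y
    have h1 : Real.exp (-α * ‖y - p‖^2) ≤ 1 := Real.exp_le_one_iff.mpr (by rw [neg_mul]; exact neg_nonpos.mpr (by positivity))
    simp only [hψdef]
    linarith
  -- min of w on the inner sphere
  have hsphU : Metric.sphere p (R/2) ⊆ Metric.ball p R := by
    intro y hy
    rw [mem_ball, mem_sphere.mp hy]
    linarith
  have hsne : (Metric.sphere p (R/2)).Nonempty := NormedSpace.sphere_nonempty.mpr (by linarith)
  obtain ⟨ym, hym, hymmin⟩ := (isCompact_sphere p (R/2)).exists_isMinOn hsne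
    (hwc.mono (fun y hy => hcbRU (ball_subset_closedBall (hsphU hy))))
  set m : ℝ := w ym with hmdef
  have hm : 0 < m := (hballP (hsphU hym)).2
  set u : EuclideanSpace ℝ (Fin n) → ℝ := fun y => w y - m * ψ y with hudef
  have hucd : ContDiffOn ℝ (⊤:ℕ∞) u U := hw.sub (contDiffOn_const.mul hψcd.contDiffOn)
  set K : Set (EuclideanSpace ℝ (Fin n)) := Metric.closedBall p R \ Metric.ball p (R/2)
    with hKdef
  have hKcpt : IsCompact K := (isCompact_closedBall p R).diff isOpen_ball
  have hKU : K ⊆ U := fun y hy => hcbRU hy.1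
  have hKq : q ∈ K := by
    constructor
    · rw [mem_closedBall, dist_comm]
    · rw [mem_ball, dist_comm]
      push_neg
      linarith
  have hucont : ContinuousOn u K :=
    (hwc.mono hKU).sub (continuous_const.mul hψcd.continuous).continuousOn
  obtain ⟨xm, hxmK, hxmmin⟩ := hKcpt.exists_isMinOn ⟨q, hKq⟩ hucont
  -- Laplacian of u is negative on K
  have hlapu : ∀ y ∈ K, lap u y < 0 := by
    intro y hy
    have hyU := hKU hy
    have hrw : u = fun y => 1 * w y + (-m) * ψ y := by
      funext y; simp only [hudef]; ring
    have h1 : lap u y = 1 * lap w y + (-m) * lap ψ y := by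
      rw [hrw]
      exact lap_smul_add hUopen hw hψcd.contDiffOn 1 (-m) hyU
    rw [h1, hharm y hyU, lap_barrier p α C y]
    have hQ : (R/2)^2 ≤ ‖y - p‖^2 := by
      have h2 : R/2 ≤ dist y p := by
        have := hy.2
        rw [mem_ball] at this
        linarith [not_lt.mp this]
      have h3 : dist y p = ‖y - p‖ := dist_eq_norm y p
      nlinarith [dist_nonneg (x := y) (y := p)]
    have hexp : 0 < Real.exp (-α * ‖y - p‖^2) := Real.exp_pos _
    have hkey : α ≤ 4*α^2*‖y - p‖^2 - 2*α*n := by nlinarith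
    have hbig : 0 < 4*α^2*‖y - p‖^2 - 2*α*n := lt_of_lt_of_le hα hkey
    nlinarith [mul_pos hm (mul_pos hexp hbig)]
  -- the minimum is attained on the boundary spheres, and is nonneg there
  have humin : 0 ≤ u xm := by
    have hxmcb : dist xm p ≤ R := mem_closedBall.mp hxmK.1
    have hxmlb : R/2 ≤ dist xm p := not_lt.mp (fun h => hxmK.2 (mem_ball.mpr h))
    rcases eq_or_lt_of_le hxmcb with hR | hR
    · -- outer sphere : ψ = 0
      have : ψ xm = 0 := by
        simp only [hψdef, hCdef]
        rw [← dist_eq_norm, hR]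
        ring
      simp only [hudef, this, mul_zero, sub_zero]
      exact hpos xm (hKU hxmK)
    · -- not on outer sphere: interior is excluded, so inner sphere
      have hV : xm ∉ Metric.ball p R \ Metric.closedBall p (R/2) := by
        intro hmem
        have hVopen : IsOpen (Metric.ball p R \ Metric.closedBall p (R/2)) :=
          isOpen_ball.sdiff Metric.isClosed_closedBall
        have hVK : Metric.ball p R \ Metric.closedBall p (R/2) ⊆ K := fun y hy =>
          ⟨ball_subset_closedBall hy.1, fun h => hy.2 (ball_subset_closedBall h)⟩
        have hloc : IsLocalMin u xm := by
          filter_upwards [hVopen.mem_nhds hmem] with y hy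
          exact isMinOn_iff.mp hxmmin y (hVK hy)
        have := lap_nonneg_of_isLocalMin hUopen hucd (hKU hxmK) hloc
        linarith [hlapu xm hxmK]
      have hxs : dist xm p = R/2 := by
        rcases not_and_or.mp hV with h | h
        · exact absurd (mem_ball.mpr hR) h
        · have := not_not.mp h
          exact le_antisymm (mem_closedBall.mp this) hxmlb
      have hwxm : m ≤ w xm := isMinOn_iff.mp hymmin xm (mem_sphere.mpr hxs)
      have h5 : m * ψ xm ≤ m * 1 := mul_le_mul_of_nonneg_left (hψle xm) hm.le
      simp only [hudef]
      linarith
  have hKbound : ∀ y ∈ K, m * ψ y ≤ w y := by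
    intro y hy
    have := isMinOn_iff.mp hxmmin y hy
    simp only [hudef] at this humin
    linarith
  -- Hopf contradiction along the segment from q to p
  set e : EuclideanSpace ℝ (Fin n) := p - q with hedef
  have hne : ‖e‖ = R := by rw [hedef, ← dist_eq_norm]
  have hseg : ∀ t ∈ Set.Ioc (0:ℝ) (1/2), q + t • e ∈ K := by
    intro t ht
    have hnorm : ‖q + t • e - p‖ = (1-t)*R := by
      have h1 : q + t • e - p = -((1-t) • (p - q)) := by
        simp only [hedef]
        module
      rw [h1, norm_neg, norm_smul, Real.norm_eq_abs, abs_of_nonneg (by linarith [ht.2]),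
        ← dist_eq_norm]
    constructor
    · rw [mem_closedBall, dist_eq_norm, hnorm]
      nlinarith [ht.1]
    · rw [mem_ball, dist_eq_norm, hnorm]
      push_neg
      nlinarith [ht.2, hRpos]
  set φ : ℝ → ℝ := fun t => w (q + t • e) with hφdef
  set β : ℝ → ℝ := fun t => m * (Real.exp (-α * ((1-t)^2 * R^2)) - C) with hβdef
  have hβφ : ∀ t ∈ Set.Ioc (0:ℝ) (1/2), β t ≤ φ t := by
    intro t ht
    have h1 := hKbound _ (hseg t ht)
    have hnorm : ‖q + t • e - p‖^2 = (1-t)^2*R^2 := by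
      have h2 : q + t • e - p = -((1-t) • (p - q)) := by
        simp only [hedef]; module
      rw [h2, norm_neg, norm_smul, Real.norm_eq_abs, abs_of_nonneg (by linarith [ht.2]),
        ← dist_eq_norm]
      ring
    simp only [hψdef] at h1
    rw [hnorm] at h1
    exact h1
  have h0 : φ 0 = β 0 := by
    simp only [hφdef, hβdef, hCdef]
    simp [hwq]
  have hLder : HasDerivAt (fun t : ℝ => q + t • e) e 0 := by
    simpa using ((hasDerivAt_id (0:ℝ)).smul_const e).const_add q
  have hφd : HasDerivAt φ 0 0 := by
    have hlocq : IsLocalMin w q := by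
      filter_upwards [hUopen.mem_nhds hqU] with y hy
      rw [hwq]; exact hpos y hy
    have hz0 := hlocq.fderiv_eq_zero
    have hdiff : DifferentiableAt ℝ w q :=
      (hw.differentiableOn (by simp)).differentiableAt (hUopen.mem_nhds hqU)
    have h00' : q + (0:ℝ) • e = q := by simp
    rw [← h00'] at hdiff
    have := hdiff.hasFDerivAt.comp_hasDerivAt 0 hLder
    rw [h00'] at this
    rw [hz0] at this
    exact (by simpa using this : HasDerivAt (w ∘ fun t : ℝ => q + t • e) 0 0)
  have hβd : HasDerivAt β (m * (Real.exp (-α * R^2) * (α * (2 * R^2)))) 0 := by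
    have h1 : HasDerivAt (fun t : ℝ => 1 - t) (-1) 0 := by
      simpa using (hasDerivAt_id (0:ℝ)).const_sub 1
    have h2 := (h1.fun_pow 2).mul_const (R^2)
    have h3 := (h2.const_mul (-α)).exp.sub_const C
    have h4 := h3.const_mul m
    have heq : m * (Real.exp (-α * ((1-(0:ℝ))^2 * R^2)) * (-α * (((2:ℕ):ℝ) * (1-(0:ℝ))^(2-1) * -1 * R^2)))
        = m * (Real.exp (-α * R^2) * (α * (2 * R^2))) := by
      push_cast
      norm_num
    rw [heq] at h4
    exact h4
  have hfinal := deriv_le_deriv_of_le (by norm_num : (0:ℝ) < 1/2) h0 hβφ hφd hβd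
  have hposf : 0 < m * (Real.exp (-α * R^2) * (α * (2 * R^2))) :=
    mul_pos hm (mul_pos (Real.exp_pos _) (mul_pos hα (by nlinarith [hRpos])))
  linarith

end smp


/-- The Euclidean maximum modulus theorem: if `Δf = c` in the unit ball `B`,
`|∇f| ≤ 1` in `B` and `|∇f(0)| = 1`, then `f(x) = f(0) + ⟨∇f(0), x⟩` in `B`. -/
theorem maximum_modulus_euclidean {n : ℕ} (f : EuclideanSpace ℝ (Fin n) → ℝ) (c : ℝ)
    (hf : ContDiffOn ℝ (⊤ : ℕ∞) f (Metric.ball 0 1))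
    (hlap : ∀ x ∈ Metric.ball (0 : EuclideanSpace ℝ (Fin n)) 1, lap f x = c)
    (hgrad : ∀ x ∈ Metric.ball (0 : EuclideanSpace ℝ (Fin n)) 1, ‖gradient f x‖ ≤ 1)
    (h0 : ‖gradient f (0 : EuclideanSpace ℝ (Fin n))‖ = 1) :
    ∀ x ∈ Metric.ball (0 : EuclideanSpace ℝ (Fin n)) 1,
      f x = f 0 + ⟪gradient f 0, x⟫ := by
  rcases Nat.eq_zero_or_pos n with hn | hn
  · subst hn
    exfalso
    have hz : gradient f 0 = 0 := Subsingleton.elim _ _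
    rw [hz, norm_zero] at h0
    norm_num at h0
  have hUopen : IsOpen (Metric.ball (0 : EuclideanSpace ℝ (Fin n)) 1) := isOpen_ball
  have h0U : (0 : EuclideanSpace ℝ (Fin n)) ∈ Metric.ball (0 : EuclideanSpace ℝ (Fin n)) 1 :=
    mem_ball_self one_pos
  have hf' : ContDiffOn ℝ (⊤:ℕ∞) f (Metric.ball 0 1) := hf.of_le (by simp)
  set v := gradient f 0 with hv
  have hginner : ∀ (y a : EuclideanSpace ℝ (Fin n)), ⟪gradient f y, a⟫ = fderiv ℝ f y a := by
    intro y a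
    exact InnerProductSpace.toDual_symm_apply
  set w : EuclideanSpace ℝ (Fin n) → ℝ := fun y => 1 - fderiv ℝ f y v with hw
  have hdircd : ContDiffOn ℝ (⊤:ℕ∞) (fun y => fderiv ℝ f y v) (Metric.ball 0 1) :=
    (hf'.fderiv_of_isOpen (m := (⊤:ℕ∞)) hUopen (by exact_mod_cast le_top)).clm_apply
      contDiffOn_const
  have hwcd : ContDiffOn ℝ (⊤:ℕ∞) w (Metric.ball 0 1) := contDiffOn_const.sub hdircd
  have hlapconst : ∀ x : EuclideanSpace ℝ (Fin n), lap (fun _ => (1:ℝ)) x = 0 := by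
    intro x
    simp [lap, fderiv_const]
  have hharm : ∀ x ∈ Metric.ball (0 : EuclideanSpace ℝ (Fin n)) 1, lap w x = 0 := by
    intro x hx
    have h1 : w = fun y => 1 * (fun _ => (1:ℝ)) y + (-1) * (fun y => fderiv ℝ f y v) y := by
      funext y; simp [hw]; ring
    rw [h1, lap_smul_add hUopen contDiffOn_const hdircd 1 (-1) hx,
      hlapconst x, lap_dirderiv_eq_zero hUopen hf' hlap v hx]
    ring
  have hwpos : ∀ x ∈ Metric.ball (0 : EuclideanSpace ℝ (Fin n)) 1, 0 ≤ w x := by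
    intro x hx
    have h1 : fderiv ℝ f x v ≤ ‖gradient f x‖ * ‖v‖ := by
      rw [← hginner]
      exact real_inner_le_norm _ _
    have h2 : ‖gradient f x‖ * ‖v‖ ≤ 1 * 1 :=
      mul_le_mul (hgrad x hx) (le_of_eq h0) (norm_nonneg _) zero_le_one
    simp only [hw]
    linarith
  have hw0 : w 0 = 0 := by
    have h1 : fderiv ℝ f 0 v = ‖v‖^2 := by
      rw [← hginner 0 v, hv, real_inner_self_eq_norm_sq]
    simp only [hw, h1, h0]
    norm_num
  have hzero := strong_min_principle hn hwcd hharm hwpos hw0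
  have hgradv : ∀ x ∈ Metric.ball (0 : EuclideanSpace ℝ (Fin n)) 1, gradient f x = v := by
    intro x hx
    have h1 : ⟪gradient f x, v⟫ = 1 := by
      have h2 := hzero x hx
      simp only [hw] at h2
      rw [hginner]
      linarith
    have h2 : ‖gradient f x‖ ≤ 1 := hgrad x hx
    have h3 : ‖gradient f x - v‖^2 = ‖gradient f x‖^2 - 2*⟪gradient f x, v⟫ + ‖v‖^2 := by
      rw [norm_sub_sq_real]
    have h4 : ‖gradient f x - v‖^2 ≤ 0 := by
      rw [h3, h1, h0]
      nlinarith [norm_nonneg (gradient f x)]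
    have h5 : ‖gradient f x - v‖ = 0 := by
      nlinarith [norm_nonneg (gradient f x - v)]
    rw [← sub_eq_zero]
    exact norm_eq_zero.mp h5
  intro x hx
  have hL : ∀ y ∈ Metric.ball (0 : EuclideanSpace ℝ (Fin n)) 1,
      HasFDerivWithinAt (fun y => f y - ⟪v, y⟫)
        ((0 : EuclideanSpace ℝ (Fin n) →L[ℝ] ℝ)) (Metric.ball 0 1) y := by
    intro y hy
    have hfd : HasFDerivAt f (fderiv ℝ f y) y :=
      ((hf'.differentiableOn (by simp)).differentiableAt
        (hUopen.mem_nhds hy)).hasFDerivAt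
    have hveq : fderiv ℝ f y = (InnerProductSpace.toDual ℝ (EuclideanSpace ℝ (Fin n))) v := by
      have h6 := hgradv y hy
      rw [gradient] at h6
      rw [← h6]
      exact ((InnerProductSpace.toDual ℝ _).apply_symm_apply _).symm
    have h2 : HasFDerivAt (fun z => ⟪v, z⟫)
        ((InnerProductSpace.toDual ℝ (EuclideanSpace ℝ (Fin n))) v) y :=
      ((InnerProductSpace.toDual ℝ (EuclideanSpace ℝ (Fin n))) v).hasFDerivAt
    have h7 := hfd.sub h2
    rw [hveq, sub_self] at h7
    exact h7.hasFDerivWithinAt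
  have hMVT := Convex.norm_image_sub_le_of_norm_hasFDerivWithin_le
    (C := 0) (f' := fun _ => (0 : EuclideanSpace ℝ (Fin n) →L[ℝ] ℝ)) hL
    (fun y _ => by simp) (convex_ball 0 1) h0U hx
  simp only [norm_zero, zero_mul, norm_le_zero_iff, sub_eq_zero] at hMVT
  have hv0 : ⟪v, (0 : EuclideanSpace ℝ (Fin n))⟫ = 0 := inner_zero_right v
  rw [hv0] at hMVT
  have : f x - ⟪v, x⟫ = f 0 := by
    rw [hMVT]; ring
  linarith [this]
end aux
end

section
/- Let f : ℝ³ → ℝ be three times continuously differentiable. Then at every point of ℝ³ one has the right Bochner-type identity Δ_H(|∇̃_H f|²) = 2⟨∇̃_H f, ∇̃_H(Δ_H f)⟩ + 2 Σ_{i=1}^{2} |∇̃_H(Xᵢ f)|², where ⟨∇̃_H f, ∇̃_H g⟩ = (X̃₁f)(X̃₁g) + (X̃₂f)(X̃₂g). -/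
noncomputable section

/-- Partial derivative `∂_x` on `ℝ³ = ℝ × ℝ × ℝ` with coordinates `(x, y, σ)`. -/
def Dx (f : ℝ × ℝ × ℝ → ℝ) (p : ℝ × ℝ × ℝ) : ℝ := fderiv ℝ f p (1, 0, 0)

/-- Partial derivative `∂_y`. -/
def Dy (f : ℝ × ℝ × ℝ → ℝ) (p : ℝ × ℝ × ℝ) : ℝ := fderiv ℝ f p (0, 1, 0)

/-- Partial derivative `∂_σ`. -/
def Ds (f : ℝ × ℝ × ℝ → ℝ) (p : ℝ × ℝ × ℝ) : ℝ := fderiv ℝ f p (0, 0, 1)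

/-- The left-invariant horizontal vector field `X₁ = ∂_x − (y/2)∂_σ` of `ℍ¹`. -/
def X1 (f : ℝ × ℝ × ℝ → ℝ) (p : ℝ × ℝ × ℝ) : ℝ := Dx f p - p.2.1 / 2 * Ds f p

/-- The left-invariant horizontal vector field `X₂ = ∂_y + (x/2)∂_σ` of `ℍ¹`. -/
def X2 (f : ℝ × ℝ × ℝ → ℝ) (p : ℝ × ℝ × ℝ) : ℝ := Dy f p + p.1 / 2 * Ds f p

/-- The right-invariant horizontal vector field `X̃₁ = ∂_x + (y/2)∂_σ` of `ℍ¹`. -/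
def X1r (f : ℝ × ℝ × ℝ → ℝ) (p : ℝ × ℝ × ℝ) : ℝ := Dx f p + p.2.1 / 2 * Ds f p

/-- The right-invariant horizontal vector field `X̃₂ = ∂_y − (x/2)∂_σ` of `ℍ¹`. -/
def X2r (f : ℝ × ℝ × ℝ → ℝ) (p : ℝ × ℝ × ℝ) : ℝ := Dy f p - p.1 / 2 * Ds f p

/-- The horizontal Laplacian `Δ_H = X₁² + X₂²` of `ℍ¹`. -/
def lapH (f : ℝ × ℝ × ℝ → ℝ) (p : ℝ × ℝ × ℝ) : ℝ := X1 (X1 f) p + X2 (X2 f) p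

/-- The left carré du champ `|∇_H f|² = (X₁f)² + (X₂f)²`. -/
def gammaL (f : ℝ × ℝ × ℝ → ℝ) (p : ℝ × ℝ × ℝ) : ℝ := (X1 f p) ^ 2 + (X2 f p) ^ 2

/-- The right carré du champ `|∇̃_H f|² = (X̃₁f)² + (X̃₂f)²`. -/
def gammaR (f : ℝ × ℝ × ℝ → ℝ) (p : ℝ × ℝ × ℝ) : ℝ := (X1r f p) ^ 2 + (X2r f p) ^ 2

abbrev V3 := ℝ × ℝ × ℝ

def D (v : V3) (f : V3 → ℝ) (p : V3) : ℝ := fderiv ℝ f p v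

lemma D_contDiff {f : V3 → ℝ} {n m : ℕ} (hf : ContDiff ℝ n f) (h : m + 1 ≤ n) (v : V3) :
    ContDiff ℝ m (D v f) := by
  exact (hf.fderiv_right (by exact_mod_cast Nat.cast_le.2 h)).clm_apply contDiff_const

lemma D_add {g h : V3 → ℝ} {p : V3} (hg : DifferentiableAt ℝ g p) (hh : DifferentiableAt ℝ h p)
    (v : V3) : D v (fun q => g q + h q) p = D v g p + D v h p := by
  simp [D, fderiv_fun_add hg hh]

lemma D_mul {g h : V3 → ℝ} {p : V3} (hg : DifferentiableAt ℝ g p) (hh : DifferentiableAt ℝ h p)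
    (v : V3) : D v (fun q => g q * h q) p = D v g p * h p + g p * D v h p := by
  simp [D, fderiv_fun_mul hg hh]; ring

lemma D_const_mul {g : V3 → ℝ} {p : V3} (hg : DifferentiableAt ℝ g p) (c : ℝ)
    (v : V3) : D v (fun q => c * g q) p = c * D v g p := by
  simp [D, fderiv_const_mul hg c]

lemma D_sq {g : V3 → ℝ} {p : V3} (hg : DifferentiableAt ℝ g p)
    (v : V3) : D v (fun q => g q ^ 2) p = 2 * g p * D v g p := by
  have := D_mul hg hg v
  simp only [← sq] at this
  rw [this]; ring

lemma D_fst (v : V3) (p : V3) : D v (fun q => q.1) p = v.1 := by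
  have : D v (fun q : V3 => q.1) p
      = fderiv ℝ (ContinuousLinearMap.fst ℝ ℝ (ℝ × ℝ)) p v := rfl
  rw [this, ContinuousLinearMap.fderiv]
  rfl

lemma D_snd_fst (v : V3) (p : V3) : D v (fun q => q.2.1) p = v.2.1 := by
  have : D v (fun q : V3 => q.2.1) p
      = fderiv ℝ ((ContinuousLinearMap.fst ℝ ℝ ℝ).comp (ContinuousLinearMap.snd ℝ ℝ (ℝ × ℝ))) p v := rfl
  rw [this, ContinuousLinearMap.fderiv]
  rfl

lemma D_swap {f : V3 → ℝ} {p : V3} (hf : ContDiff ℝ 2 f) (v w : V3) :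
    D v (D w f) p = D w (D v f) p := by
  have hdf : DifferentiableAt ℝ (fderiv ℝ f) p :=
    ((hf.fderiv_right (m := 1) (by norm_num)).differentiable (by norm_num)) p
  have h1 : D v (D w f) p = fderiv ℝ (fderiv ℝ f) p v w := by
    have e : D w f = fun q => fderiv ℝ f q w := rfl
    rw [D, e, fderiv_clm_apply hdf (differentiableAt_const _)]
    simp
  have h2 : D w (D v f) p = fderiv ℝ (fderiv ℝ f) p w v := by
    have e : D v f = fun q => fderiv ℝ f q v := rfl
    rw [D, e, fderiv_clm_apply hdf (differentiableAt_const _)]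
    simp
  rw [h1, h2]
  exact (hf.contDiffAt.isSymmSndFDerivAt (by norm_num)) v w

/-- Generic horizontal field: `W a c f = D_a f + c · D_z f` with `z = (0,0,1)`. -/
def W (a : V3) (c : V3 → ℝ) (f : V3 → ℝ) (p : V3) : ℝ := D a f p + c p * D (0,0,1) f p

section Wlemmas
variable {a : V3} {c : V3 → ℝ} {f g h : V3 → ℝ} {p : V3}

lemma W_contDiff (hc : ContDiff ℝ (⊤ : ℕ∞) c) {n m : ℕ} (hf : ContDiff ℝ n f) (hmn : m + 1 ≤ n) :
    ContDiff ℝ m (W a c f) :=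
  (D_contDiff hf hmn a).add ((hc.of_le (by exact_mod_cast le_top)).mul (D_contDiff hf hmn _))

lemma W_add (hg : DifferentiableAt ℝ g p) (hh : DifferentiableAt ℝ h p) :
    W a c (fun q => g q + h q) p = W a c g p + W a c h p := by
  unfold W; rw [D_add hg hh, D_add hg hh]; ring

lemma W_mul (hg : DifferentiableAt ℝ g p) (hh : DifferentiableAt ℝ h p) :
    W a c (fun q => g q * h q) p = W a c g p * h p + g p * W a c h p := by
  unfold W; rw [D_mul hg hh, D_mul hg hh]; ring

lemma W_const_mul (hg : DifferentiableAt ℝ g p) (k : ℝ) :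
    W a c (fun q => k * g q) p = k * W a c g p := by
  unfold W; rw [D_const_mul hg, D_const_mul hg]; ring

lemma W_sq (hg : DifferentiableAt ℝ g p) :
    W a c (fun q => g q ^ 2) p = 2 * g p * W a c g p := by
  unfold W; rw [D_sq hg, D_sq hg]; ring

lemma D_W {ℓ : V3 → ℝ} (hc : ContDiff ℝ (⊤ : ℕ∞) c) (hDc : ∀ v q, D v c q = ℓ v)
    (hf : ContDiff ℝ 2 f) (v : V3) :
    D v (W a c f) p = D v (D a f) p + ℓ v * D (0,0,1) f p + c p * D v (D (0,0,1) f) p := by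
  have hDa : DifferentiableAt ℝ (D a f) p :=
    ((D_contDiff (m := 1) hf (by norm_num) a).differentiable (by norm_num)) p
  have hDz : DifferentiableAt ℝ (D (0,0,1) f) p :=
    ((D_contDiff (m := 1) hf (by norm_num) _).differentiable (by norm_num)) p
  have hcd : DifferentiableAt ℝ c p := ((hc.of_le (by exact_mod_cast le_top : (1 : WithTop ℕ∞) ≤ ((⊤ : ℕ∞) : WithTop ℕ∞))).differentiable (by norm_num)) p
  have e : W a c f = fun q => D a f q + c q * D (0,0,1) f q := rfl
  rw [e, D_add (h := fun q => c q * D (0,0,1) f q) hDa (hcd.mul hDz), D_mul hcd hDz, hDc]; ring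

lemma W_W {b : V3} {c' : V3 → ℝ} {ℓ : V3 → ℝ} (hc : ContDiff ℝ (⊤ : ℕ∞) c)
    (hDc : ∀ v q, D v c q = ℓ v) (hf : ContDiff ℝ 2 f) :
    W b c' (W a c f) p
      = (D b (D a f) p + ℓ b * D (0,0,1) f p + c p * D b (D (0,0,1) f) p)
        + c' p * (D (0,0,1) (D a f) p + ℓ (0,0,1) * D (0,0,1) f p
            + c p * D (0,0,1) (D (0,0,1) f) p) := by
  show D b (W a c f) p + c' p * D (0,0,1) (W a c f) p = _
  rw [D_W hc hDc hf b, D_W hc hDc hf (0,0,1)]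

end Wlemmas

/-- coefficient functions -/
def c1 : V3 → ℝ := fun p => -(p.2.1 / 2)
def c2 : V3 → ℝ := fun p => p.1 / 2
def c1r : V3 → ℝ := fun p => p.2.1 / 2
def c2r : V3 → ℝ := fun p => -(p.1 / 2)
def l1 : V3 → ℝ := fun v => -(v.2.1 / 2)
def l2 : V3 → ℝ := fun v => v.1 / 2
def l1r : V3 → ℝ := fun v => v.2.1 / 2
def l2r : V3 → ℝ := fun v => -(v.1 / 2)

lemma coord1_contDiff : ContDiff ℝ (⊤ : ℕ∞) (fun p : V3 => p.1) := contDiff_fst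
lemma coord2_contDiff : ContDiff ℝ (⊤ : ℕ∞) (fun p : V3 => p.2.1) := contDiff_fst.comp contDiff_snd

lemma hc1 : ContDiff ℝ (⊤ : ℕ∞) c1 := ((coord2_contDiff).div_const 2).neg
lemma hc2 : ContDiff ℝ (⊤ : ℕ∞) c2 := (coord1_contDiff).div_const 2
lemma hc1r : ContDiff ℝ (⊤ : ℕ∞) c1r := (coord2_contDiff).div_const 2
lemma hc2r : ContDiff ℝ (⊤ : ℕ∞) c2r := ((coord1_contDiff).div_const 2).neg

lemma coord1_diff : Differentiable ℝ (fun p : V3 => p.1) :=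
  coord1_contDiff.differentiable (by simp)
lemma coord2_diff : Differentiable ℝ (fun p : V3 => p.2.1) :=
  coord2_contDiff.differentiable (by simp)

lemma hDc1 : ∀ v q, D v c1 q = l1 v := by
  intro v q
  have e : c1 = fun p : V3 => (-(1/2 : ℝ)) * p.2.1 := by funext p; simp [c1]; ring
  rw [e, D_const_mul (coord2_diff q), D_snd_fst]; simp [l1]; ring
lemma hDc2 : ∀ v q, D v c2 q = l2 v := by
  intro v q
  have e : c2 = fun p : V3 => ((1/2 : ℝ)) * p.1 := by funext p; simp [c2]; ring
  rw [e, D_const_mul (coord1_diff q), D_fst]; simp [l2]; ring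
lemma hDc1r : ∀ v q, D v c1r q = l1r v := by
  intro v q
  have e : c1r = fun p : V3 => ((1/2 : ℝ)) * p.2.1 := by funext p; simp [c1r]; ring
  rw [e, D_const_mul (coord2_diff q), D_snd_fst]; simp [l1r]; ring
lemma hDc2r : ∀ v q, D v c2r q = l2r v := by
  intro v q
  have e : c2r = fun p : V3 => (-(1/2 : ℝ)) * p.1 := by funext p; simp [c2r]; ring
  rw [e, D_const_mul (coord1_diff q), D_fst]; simp [l2r]; ring

lemma X1_eq (f : V3 → ℝ) : X1 f = W (1,0,0) c1 f := by
  funext p; simp [X1, W, Dx, Ds, D, c1]; ring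
lemma X2_eq (f : V3 → ℝ) : X2 f = W (0,1,0) c2 f := by
  funext p; simp [X2, W, Dy, Ds, D, c2]
lemma X1r_eq (f : V3 → ℝ) : X1r f = W (1,0,0) c1r f := by
  funext p; simp [X1r, W, Dx, Ds, D, c1r]
lemma X2r_eq (f : V3 → ℝ) : X2r f = W (0,1,0) c2r f := by
  funext p; simp [X2r, W, Dy, Ds, D, c2r]; ring

section comm
variable {f : V3 → ℝ} {p : V3}

lemma comm11 (hf : ContDiff ℝ 2 f) : X1 (X1r f) p = X1r (X1 f) p := by
  simp only [X1_eq, X1r_eq]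
  rw [W_W hc1r hDc1r hf, W_W hc1 hDc1 hf,
    D_swap hf (0,0,1) (1,0,0)]
  simp only [c1, c1r, l1, l1r]
  norm_num; ring

lemma comm21 (hf : ContDiff ℝ 2 f) : X2 (X1r f) p = X1r (X2 f) p := by
  simp only [X1_eq, X2_eq, X1r_eq]
  rw [W_W hc1r hDc1r hf, W_W hc2 hDc2 hf,
    D_swap hf (0,0,1) (1,0,0), D_swap hf (0,1,0) (1,0,0), D_swap hf (0,0,1) (0,1,0)]
  simp only [c1r, c2, l1r, l2]
  norm_num [Ds, D]; ring

lemma comm12 (hf : ContDiff ℝ 2 f) : X1 (X2r f) p = X2r (X1 f) p := by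
  simp only [X1_eq, X2_eq, X1r_eq, X2r_eq]
  rw [W_W hc2r hDc2r hf, W_W hc1 hDc1 hf,
    D_swap hf (0,0,1) (1,0,0), D_swap hf (0,1,0) (1,0,0), D_swap hf (0,0,1) (0,1,0)]
  simp only [c1, c2r, l1, l2r]
  norm_num [Ds, D]; ring

lemma comm22 (hf : ContDiff ℝ 2 f) : X2 (X2r f) p = X2r (X2 f) p := by
  simp only [X2_eq, X2r_eq]
  rw [W_W hc2r hDc2r hf, W_W hc2 hDc2 hf,
    D_swap hf (0,0,1) (0,1,0)]
  simp only [c2, c2r, l2, l2r]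
  norm_num; ring

end comm

section second
variable {f : V3 → ℝ} {p : V3}

lemma X1_cd {n m : ℕ} (hf : ContDiff ℝ n f) (h : m + 1 ≤ n) : ContDiff ℝ m (X1 f) := by
  rw [X1_eq]; exact W_contDiff hc1 hf h
lemma X2_cd {n m : ℕ} (hf : ContDiff ℝ n f) (h : m + 1 ≤ n) : ContDiff ℝ m (X2 f) := by
  rw [X2_eq]; exact W_contDiff hc2 hf h
lemma X1r_cd {n m : ℕ} (hf : ContDiff ℝ n f) (h : m + 1 ≤ n) : ContDiff ℝ m (X1r f) := by
  rw [X1r_eq]; exact W_contDiff hc1r hf h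
lemma X2r_cd {n m : ℕ} (hf : ContDiff ℝ n f) (h : m + 1 ≤ n) : ContDiff ℝ m (X2r f) := by
  rw [X2r_eq]; exact W_contDiff hc2r hf h

lemma X1r_add {g h : V3 → ℝ} (hg : DifferentiableAt ℝ g p) (hh : DifferentiableAt ℝ h p) :
    X1r (fun q => g q + h q) p = X1r g p + X1r h p := by
  simp only [X1r_eq]; exact W_add hg hh
lemma X2r_add {g h : V3 → ℝ} (hg : DifferentiableAt ℝ g p) (hh : DifferentiableAt ℝ h p) :
    X2r (fun q => g q + h q) p = X2r g p + X2r h p := by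
  simp only [X2r_eq]; exact W_add hg hh

lemma lapH_X1r (hf : ContDiff ℝ 3 f) : lapH (X1r f) p = X1r (lapH f) p := by
  have h2 : ContDiff ℝ 2 f := hf.of_le (by norm_num)
  have hX1f : ContDiff ℝ 2 (X1 f) := X1_cd hf (by norm_num)
  have hX2f : ContDiff ℝ 2 (X2 f) := X2_cd hf (by norm_num)
  have e1 : X1 (X1r f) = X1r (X1 f) := funext fun q => comm11 h2
  have e2 : X2 (X1r f) = X1r (X2 f) := funext fun q => comm21 h2
  have hd1 : DifferentiableAt ℝ (X1 (X1 f)) p :=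
    ((X1_cd hX1f (by norm_num) : ContDiff ℝ 1 _).differentiable (by norm_num)) p
  have hd2 : DifferentiableAt ℝ (X2 (X2 f)) p :=
    ((X2_cd hX2f (by norm_num) : ContDiff ℝ 1 _).differentiable (by norm_num)) p
  show X1 (X1 (X1r f)) p + X2 (X2 (X1r f)) p = X1r (lapH f) p
  rw [e1, e2, comm11 hX1f, comm21 hX2f]
  have : lapH f = fun q => X1 (X1 f) q + X2 (X2 f) q := rfl
  rw [this, X1r_add hd1 hd2]

lemma lapH_X2r (hf : ContDiff ℝ 3 f) : lapH (X2r f) p = X2r (lapH f) p := by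
  have h2 : ContDiff ℝ 2 f := hf.of_le (by norm_num)
  have hX1f : ContDiff ℝ 2 (X1 f) := X1_cd hf (by norm_num)
  have hX2f : ContDiff ℝ 2 (X2 f) := X2_cd hf (by norm_num)
  have e1 : X1 (X2r f) = X2r (X1 f) := funext fun q => comm12 h2
  have e2 : X2 (X2r f) = X2r (X2 f) := funext fun q => comm22 h2
  have hd1 : DifferentiableAt ℝ (X1 (X1 f)) p :=
    ((X1_cd hX1f (by norm_num) : ContDiff ℝ 1 _).differentiable (by norm_num)) p
  have hd2 : DifferentiableAt ℝ (X2 (X2 f)) p :=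
    ((X2_cd hX2f (by norm_num) : ContDiff ℝ 1 _).differentiable (by norm_num)) p
  show X1 (X1 (X2r f)) p + X2 (X2 (X2r f)) p = X2r (lapH f) p
  rw [e1, e2, comm12 hX1f, comm22 hX2f]
  have : lapH f = fun q => X1 (X1 f) q + X2 (X2 f) q := rfl
  rw [this, X2r_add hd1 hd2]

end second

lemma W_gamma {a : V3} {c : V3 → ℝ} {u v : V3 → ℝ} {p : V3} (hc : ContDiff ℝ (⊤ : ℕ∞) c)
    (hu : ContDiff ℝ 2 u) (hv : ContDiff ℝ 2 v) :
    W a c (W a c (fun q => u q ^ 2 + v q ^ 2)) p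
      = 2 * (u p * W a c (W a c u) p + (W a c u p) ^ 2
            + v p * W a c (W a c v) p + (W a c v p) ^ 2) := by
  have hud : Differentiable ℝ u := hu.differentiable (by norm_num)
  have hvd : Differentiable ℝ v := hv.differentiable (by norm_num)
  have hWu : Differentiable ℝ (W a c u) :=
    (W_contDiff hc hu (by norm_num) : ContDiff ℝ 1 _).differentiable (by norm_num)
  have hWv : Differentiable ℝ (W a c v) :=
    (W_contDiff hc hv (by norm_num) : ContDiff ℝ 1 _).differentiable (by norm_num)
  have h1 : W a c (fun q => u q ^ 2 + v q ^ 2)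
      = fun q => 2 * (u q * W a c u q) + 2 * (v q * W a c v q) := by
    funext q
    rw [W_add (g := fun q => u q ^ 2) (h := fun q => v q ^ 2) ((hud q).pow 2) ((hvd q).pow 2), W_sq (hud q), W_sq (hvd q)]; ring
  rw [h1, W_add (by fun_prop) (by fun_prop),
    W_const_mul (g := fun q => u q * W a c u q) ((hud p).mul (hWu p)), W_const_mul (g := fun q => v q * W a c v q) ((hvd p).mul (hWv p)),
    W_mul (hud p) (hWu p), W_mul (hvd p) (hWv p)]
  ring

/-- The right Bochner-type identity in `ℍ¹`: for `f ∈ C³(ℝ³)`,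
`Δ_H(|∇̃_H f|²) = 2⟨∇̃_H f, ∇̃_H(Δ_H f)⟩ + 2 Σ_{i=1}^{2} |∇̃_H(Xᵢ f)|²`. -/
theorem right_bochner_identity_H1 (f : ℝ × ℝ × ℝ → ℝ) (hf : ContDiff ℝ 3 f) (p : ℝ × ℝ × ℝ) :
    lapH (gammaR f) p
      = 2 * (X1r f p * X1r (lapH f) p + X2r f p * X2r (lapH f) p)
        + 2 * (((X1r (X1 f) p) ^ 2 + (X2r (X1 f) p) ^ 2)
             + ((X1r (X2 f) p) ^ 2 + (X2r (X2 f) p) ^ 2)) := by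
  have h2f : ContDiff ℝ 2 f := hf.of_le (by norm_num)
  have hu : ContDiff ℝ 2 (X1r f) := X1r_cd hf (by norm_num)
  have hv : ContDiff ℝ 2 (X2r f) := X2r_cd hf (by norm_num)
  have hg : gammaR f = fun q => X1r f q ^ 2 + X2r f q ^ 2 := rfl
  have h1 : X1 (X1 (gammaR f)) p
      = 2 * (X1r f p * X1 (X1 (X1r f)) p + (X1 (X1r f) p) ^ 2
            + X2r f p * X1 (X1 (X2r f)) p + (X1 (X2r f) p) ^ 2) := by
    rw [hg]; simp only [X1_eq]; exact W_gamma hc1 hu hv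
  have h2 : X2 (X2 (gammaR f)) p
      = 2 * (X1r f p * X2 (X2 (X1r f)) p + (X2 (X1r f) p) ^ 2
            + X2r f p * X2 (X2 (X2r f)) p + (X2 (X2r f) p) ^ 2) := by
    rw [hg]; simp only [X2_eq]; exact W_gamma hc2 hu hv
  have hl : lapH (gammaR f) p = X1 (X1 (gammaR f)) p + X2 (X2 (gammaR f)) p := rfl
  have hlu : X1 (X1 (X1r f)) p + X2 (X2 (X1r f)) p = X1r (lapH f) p := lapH_X1r hf
  have hlv : X1 (X1 (X2r f)) p + X2 (X2 (X2r f)) p = X2r (lapH f) p := lapH_X2r hf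
  rw [hl, h1, h2, comm11 h2f, comm12 h2f, comm21 h2f, comm22 h2f]
  linear_combination 2 * X1r f p * hlu + 2 * X2r f p * hlv
end
end

section
/- Let Ω ⊆ ℝ³ be open and let f : ℝ³ → ℝ be three times continuously differentiable on Ω. If Δ_H f = c on Ω for some constant c ∈ ℝ, then at every point of Ω one has Δ_H(|∇̃_H f|²) = 2 Σ_{i=1}^{2} |∇̃_H(Xᵢ f)|², and in particular Δ_H(|∇̃_H f|²) ≥ 0 on Ω, i.e., the right carré du champ of f is Δ_H-subharmonic. -/
noncomputable section

/-- Directional derivative operator. -/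
def pd (v : V3) (f : V3 → ℝ) (p : V3) : ℝ := fderiv ℝ f p v

lemma pd_congr {f g : V3 → ℝ} {p : V3} (v : V3) (h : f =ᶠ[nhds p] g) :
    pd v f p = pd v g p := by unfold pd; rw [h.fderiv_eq]

lemma pd_const (v : V3) (p : V3) (c : ℝ) : pd v (fun _ => c) p = 0 := by
  simp [pd]

lemma pd_add {f g : V3 → ℝ} {p : V3} (v : V3) (hf : DifferentiableAt ℝ f p)
    (hg : DifferentiableAt ℝ g p) :
    pd v (fun q => f q + g q) p = pd v f p + pd v g p := by
  simp [pd, fderiv_fun_add hf hg]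

lemma pd_mul {f g : V3 → ℝ} {p : V3} (v : V3) (hf : DifferentiableAt ℝ f p)
    (hg : DifferentiableAt ℝ g p) :
    pd v (fun q => f q * g q) p = pd v f p * g p + f p * pd v g p := by
  simp [pd, fderiv_fun_mul hf hg]; ring

lemma pd_const_mul {f : V3 → ℝ} {p : V3} (v : V3) (c : ℝ) (hf : DifferentiableAt ℝ f p) :
    pd v (fun q => c * f q) p = c * pd v f p := by
  simp [pd, fderiv_const_mul hf]

lemma pd_clm (v : V3) (l : V3 →L[ℝ] ℝ) (p : V3) : pd v (fun q => l q) p = l v := by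
  simp [pd, ContinuousLinearMap.fderiv]

lemma contDiffAt_pd {n m : WithTop ℕ∞} {f : V3 → ℝ} {p : V3} (v : V3)
    (hf : ContDiffAt ℝ n f p) (hmn : m + 1 ≤ n) : ContDiffAt ℝ m (pd v f) p := by
  have h1 : ContDiffAt ℝ m (fderiv ℝ f) p := hf.fderiv_right hmn
  exact (ContinuousLinearMap.apply ℝ ℝ v).contDiff.contDiffAt.comp p h1

lemma pd_comm {f : V3 → ℝ} {p : V3} (v w : V3) (hf : ContDiffAt ℝ 2 f p) :
    pd v (pd w f) p = pd w (pd v f) p := by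
  have hd : DifferentiableAt ℝ (fderiv ℝ f) p := by
    have : ContDiffAt ℝ 1 (fderiv ℝ f) p := hf.fderiv_right (by norm_num)
    exact this.differentiableAt (by norm_num)
  have key : ∀ u z : V3, pd u (pd z f) p = fderiv ℝ (fderiv ℝ f) p u z := by
    intro u z
    have : pd z f = fun q => (fderiv ℝ f q) z := rfl
    rw [this]
    unfold pd
    rw [fderiv_clm_apply hd (differentiableAt_const z)]
    simp
  rw [key, key, (hf.isSymmSndFDerivAt (by norm_num)).eq]

def e1 : V3 := (1, 0, 0)
def e2 : V3 := (0, 1, 0)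
def e3 : V3 := (0, 0, 1)

/-- A horizontal-type vector field: `pd` along `α` plus a linear coefficient times `∂_σ`. -/
def VF (α : V3) (l : V3 →L[ℝ] ℝ) (f : V3 → ℝ) (p : V3) : ℝ :=
  pd α f p + l p * pd e3 f p

lemma VF_congr {f g : V3 → ℝ} {p : V3} (α : V3) (l : V3 →L[ℝ] ℝ) (h : f =ᶠ[nhds p] g) :
    VF α l f p = VF α l g p := by
  unfold VF; rw [pd_congr α h, pd_congr e3 h]

lemma contDiffAt_VF {n m : WithTop ℕ∞} {f : V3 → ℝ} {p : V3} (α : V3) (l : V3 →L[ℝ] ℝ)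
    (hf : ContDiffAt ℝ n f p) (hmn : m + 1 ≤ n) : ContDiffAt ℝ m (VF α l f) p :=
  (contDiffAt_pd α hf hmn).add ((l.contDiff.contDiffAt).mul (contDiffAt_pd e3 hf hmn))

lemma differentiableAt_VF {f : V3 → ℝ} {p : V3} (α : V3) (l : V3 →L[ℝ] ℝ)
    (hf : ContDiffAt ℝ 2 f p) : DifferentiableAt ℝ (VF α l f) p := by
  have : ContDiffAt ℝ 1 (VF α l f) p := contDiffAt_VF α l hf (by norm_num)
  exact this.differentiableAt (by norm_num)

lemma differentiableAt_pd' {f : V3 → ℝ} {p : V3} (v : V3) (hf : ContDiffAt ℝ 2 f p) :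
    DifferentiableAt ℝ (pd v f) p := by
  have : ContDiffAt ℝ 1 (pd v f) p := contDiffAt_pd v hf (by norm_num)
  exact this.differentiableAt (by norm_num)

lemma VF_add {f g : V3 → ℝ} {p : V3} (α : V3) (l : V3 →L[ℝ] ℝ)
    (hf : DifferentiableAt ℝ f p) (hg : DifferentiableAt ℝ g p) :
    VF α l (fun q => f q + g q) p = VF α l f p + VF α l g p := by
  unfold VF; rw [pd_add α hf hg, pd_add e3 hf hg]; ring

lemma VF_mul {f g : V3 → ℝ} {p : V3} (α : V3) (l : V3 →L[ℝ] ℝ)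
    (hf : DifferentiableAt ℝ f p) (hg : DifferentiableAt ℝ g p) :
    VF α l (fun q => f q * g q) p = VF α l f p * g p + f p * VF α l g p := by
  unfold VF; rw [pd_mul α hf hg, pd_mul e3 hf hg]; ring

lemma VF_const_mul {f : V3 → ℝ} {p : V3} (α : V3) (l : V3 →L[ℝ] ℝ) (c : ℝ)
    (hf : DifferentiableAt ℝ f p) :
    VF α l (fun q => c * f q) p = c * VF α l f p := by
  unfold VF; rw [pd_const_mul α c hf, pd_const_mul e3 c hf]; ring

lemma VF_const (α : V3) (l : V3 →L[ℝ] ℝ) (p : V3) (c : ℝ) :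
    VF α l (fun _ => c) p = 0 := by
  unfold VF; rw [pd_const, pd_const]; ring

/-- Expansion of `pd v (VF β m f)`. -/
lemma pd_VF {f : V3 → ℝ} {p : V3} (v β : V3) (m : V3 →L[ℝ] ℝ) (hf : ContDiffAt ℝ 2 f p) :
    pd v (VF β m f) p
      = pd v (pd β f) p + m v * pd e3 f p + m p * pd v (pd e3 f) p := by
  have h1 : DifferentiableAt ℝ (pd β f) p := differentiableAt_pd' β hf
  have h3 : DifferentiableAt ℝ (pd e3 f) p := differentiableAt_pd' e3 hf
  have hm : DifferentiableAt ℝ (fun q => m q) p := m.differentiableAt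
  have : VF β m f = fun q => pd β f q + (fun q => m q * pd e3 f q) q := rfl
  rw [this, pd_add (g := fun q => m q * pd e3 f q) v h1 (hm.mul h3), pd_mul v hm h3, pd_clm]
  ring

/-- Commutation of two horizontal-type fields whose coefficients don't depend on σ. -/
lemma VF_comm {f : V3 → ℝ} {p : V3} (α β : V3) (l m : V3 →L[ℝ] ℝ)
    (hf : ContDiffAt ℝ 2 f p) (hl : l e3 = 0) (hm : m e3 = 0) (hlm : m α = l β) :
    VF α l (VF β m f) p = VF β m (VF α l f) p := by
  have expand : ∀ (γ : V3) (n : V3 →L[ℝ] ℝ) (g : V3 → ℝ),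
      VF γ n g p = pd γ g p + n p * pd e3 g p := fun _ _ _ => rfl
  rw [expand α l, expand β m, pd_VF α β m hf, pd_VF e3 β m hf, pd_VF β α l hf,
    pd_VF e3 α l hf, pd_comm α β hf, pd_comm α e3 hf, pd_comm β e3 hf, hl, hm, hlm]
  ring

/-- Bochner-type square rule for a horizontal-type field. -/
lemma VF_VF_sq {U : Set V3} (hU : IsOpen U) {p : V3} (hp : p ∈ U) {g : V3 → ℝ}
    (hg : ∀ q ∈ U, ContDiffAt ℝ 2 g q) (α : V3) (l : V3 →L[ℝ] ℝ) :
    VF α l (VF α l (fun q => (g q) ^ 2)) p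
      = 2 * (VF α l g p) ^ 2 + 2 * g p * VF α l (VF α l g) p := by
  have hsq : ∀ q ∈ U, VF α l (fun q' => (g q') ^ 2) q = 2 * (g q * VF α l g q) := by
    intro q hq
    have hd : DifferentiableAt ℝ g q := (hg q hq).differentiableAt (by norm_num)
    have h2 : (fun q' => (g q') ^ 2) = fun q' => g q' * g q' := by funext q'; ring
    rw [h2, VF_mul α l hd hd]; ring
  have hev : (VF α l (fun q' => (g q') ^ 2)) =ᶠ[nhds p]
      (fun q => 2 * (g q * VF α l g q)) :=
    Filter.eventuallyEq_of_mem (hU.mem_nhds hp) hsq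
  rw [VF_congr α l hev]
  have hdg : DifferentiableAt ℝ g p := (hg p hp).differentiableAt (by norm_num)
  have hdVg : DifferentiableAt ℝ (VF α l g) p := differentiableAt_VF α l (hg p hp)
  rw [VF_const_mul (f := fun q => g q * VF α l g q) α l 2 (hdg.mul hdVg), VF_mul α l hdg hdVg]; ring

/-! ### The concrete fields as `VF`s -/

def Lx : V3 →L[ℝ] ℝ := ContinuousLinearMap.fst ℝ ℝ (ℝ × ℝ)
def Ly : V3 →L[ℝ] ℝ :=
  (ContinuousLinearMap.fst ℝ ℝ ℝ).comp (ContinuousLinearMap.snd ℝ ℝ (ℝ × ℝ))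

def lX1 : V3 →L[ℝ] ℝ := (-(1/2) : ℝ) • Ly
def lX2 : V3 →L[ℝ] ℝ := ((1/2) : ℝ) • Lx
def lX1r : V3 →L[ℝ] ℝ := ((1/2) : ℝ) • Ly
def lX2r : V3 →L[ℝ] ℝ := (-(1/2) : ℝ) • Lx

lemma Lx_apply (p : V3) : Lx p = p.1 := rfl
lemma Ly_apply (p : V3) : Ly p = p.2.1 := rfl

lemma X1_eq_s5 (g : V3 → ℝ) : X1 g = VF e1 lX1 g := by
  funext q
  show Dx g q - q.2.1 / 2 * Ds g q = pd e1 g q + lX1 q * pd e3 g q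
  have h1 : Dx g q = pd e1 g q := rfl
  have h3 : Ds g q = pd e3 g q := rfl
  have hl : lX1 q = -(1/2) * q.2.1 := rfl
  rw [h1, h3, hl]; ring

lemma X2_eq_s5 (g : V3 → ℝ) : X2 g = VF e2 lX2 g := by
  funext q
  show Dy g q + q.1 / 2 * Ds g q = pd e2 g q + lX2 q * pd e3 g q
  have h1 : Dy g q = pd e2 g q := rfl
  have h3 : Ds g q = pd e3 g q := rfl
  have hl : lX2 q = (1/2) * q.1 := rfl
  rw [h1, h3, hl]; ring

lemma X1r_eq_s5 (g : V3 → ℝ) : X1r g = VF e1 lX1r g := by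
  funext q
  show Dx g q + q.2.1 / 2 * Ds g q = pd e1 g q + lX1r q * pd e3 g q
  have h1 : Dx g q = pd e1 g q := rfl
  have h3 : Ds g q = pd e3 g q := rfl
  have hl : lX1r q = (1/2) * q.2.1 := rfl
  rw [h1, h3, hl]; ring

lemma X2r_eq_s5 (g : V3 → ℝ) : X2r g = VF e2 lX2r g := by
  funext q
  show Dy g q - q.1 / 2 * Ds g q = pd e2 g q + lX2r q * pd e3 g q
  have h1 : Dy g q = pd e2 g q := rfl
  have h3 : Ds g q = pd e3 g q := rfl
  have hl : lX2r q = -(1/2) * q.1 := rfl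
  rw [h1, h3, hl]; ring

lemma lX1_e3 : lX1 e3 = 0 := by simp [lX1, Ly, e3]
lemma lX2_e3 : lX2 e3 = 0 := by simp [lX2, Lx, e3]

/-- The key per-field computation: for a right-invariant-type field `B = VF β m`
commuting with `X₁, X₂`, one has `Δ_H((Bf)²) = 2((B X₁ f)² + (B X₂ f)²)` on `Ω`. -/
lemma key_j (Ω : Set V3) (hΩ : IsOpen Ω) (f : V3 → ℝ) (hf : ContDiffOn ℝ 3 f Ω) (c : ℝ)
    (hlap : ∀ q ∈ Ω, lapH f q = c) (β : V3) (m : V3 →L[ℝ] ℝ)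
    (hm3 : m e3 = 0) (hm1 : m e1 = lX1 β) (hm2 : m e2 = lX2 β)
    {p : V3} (hp : p ∈ Ω) :
    VF e1 lX1 (VF e1 lX1 (fun q => (VF β m f q) ^ 2)) p
      + VF e2 lX2 (VF e2 lX2 (fun q => (VF β m f q) ^ 2)) p
    = 2 * ((VF β m (VF e1 lX1 f) p) ^ 2 + (VF β m (VF e2 lX2 f) p) ^ 2) := by
  have hC3 : ∀ q ∈ Ω, ContDiffAt ℝ 3 f q := fun q hq => hf.contDiffAt (hΩ.mem_nhds hq)
  have hC2 : ∀ q ∈ Ω, ContDiffAt ℝ 2 f q := fun q hq => (hC3 q hq).of_le (by norm_num)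
  have hgC2 : ∀ q ∈ Ω, ContDiffAt ℝ 2 (VF β m f) q :=
    fun q hq => contDiffAt_VF β m (hC3 q hq) (by norm_num)
  have bo1 := VF_VF_sq hΩ hp hgC2 e1 lX1
  have bo2 := VF_VF_sq hΩ hp hgC2 e2 lX2
  have comm1 : ∀ q ∈ Ω, VF e1 lX1 (VF β m f) q = VF β m (VF e1 lX1 f) q :=
    fun q hq => VF_comm e1 β lX1 m (hC2 q hq) lX1_e3 hm3 hm1
  have comm2 : ∀ q ∈ Ω, VF e2 lX2 (VF β m f) q = VF β m (VF e2 lX2 f) q :=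
    fun q hq => VF_comm e2 β lX2 m (hC2 q hq) lX2_e3 hm3 hm2
  -- the two C2 left-derivative functions
  have hXC2 : ∀ (α : V3) (l : V3 →L[ℝ] ℝ) (q : V3), q ∈ Ω →
      ContDiffAt ℝ 2 (VF α l f) q :=
    fun α l q hq => contDiffAt_VF α l (hC3 q hq) (by norm_num)
  -- Δ_H (B f) p = 0
  have step : VF e1 lX1 (VF e1 lX1 (VF β m f)) p
      + VF e2 lX2 (VF e2 lX2 (VF β m f)) p = 0 := by
    have t1 : VF e1 lX1 (VF e1 lX1 (VF β m f)) p
        = VF β m (VF e1 lX1 (VF e1 lX1 f)) p := by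
      rw [VF_congr e1 lX1 (Filter.eventuallyEq_of_mem (hΩ.mem_nhds hp) comm1)]
      exact VF_comm e1 β lX1 m (hXC2 e1 lX1 p hp) lX1_e3 hm3 hm1
    have t2 : VF e2 lX2 (VF e2 lX2 (VF β m f)) p
        = VF β m (VF e2 lX2 (VF e2 lX2 f)) p := by
      rw [VF_congr e2 lX2 (Filter.eventuallyEq_of_mem (hΩ.mem_nhds hp) comm2)]
      exact VF_comm e2 β lX2 m (hXC2 e2 lX2 p hp) lX2_e3 hm3 hm2
    have hd1 : DifferentiableAt ℝ (VF e1 lX1 (VF e1 lX1 f)) p := by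
      have : ContDiffAt ℝ 1 (VF e1 lX1 (VF e1 lX1 f)) p :=
        contDiffAt_VF e1 lX1 (hXC2 e1 lX1 p hp) (by norm_num)
      exact this.differentiableAt (by norm_num)
    have hd2 : DifferentiableAt ℝ (VF e2 lX2 (VF e2 lX2 f)) p := by
      have : ContDiffAt ℝ 1 (VF e2 lX2 (VF e2 lX2 f)) p :=
        contDiffAt_VF e2 lX2 (hXC2 e2 lX2 p hp) (by norm_num)
      exact this.differentiableAt (by norm_num)
    have hsum : ∀ q ∈ Ω,
        VF e1 lX1 (VF e1 lX1 f) q + VF e2 lX2 (VF e2 lX2 f) q = c := by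
      intro q hq
      have : lapH f q = VF e1 lX1 (VF e1 lX1 f) q + VF e2 lX2 (VF e2 lX2 f) q := by
        show X1 (X1 f) q + X2 (X2 f) q = _
        rw [X1_eq_s5 f, X1_eq_s5 (VF e1 lX1 f), X2_eq_s5 f, X2_eq_s5 (VF e2 lX2 f)]
      rw [← this, hlap q hq]
    rw [t1, t2, ← VF_add β m hd1 hd2,
      VF_congr β m (g := fun _ => c) (Filter.eventuallyEq_of_mem (hΩ.mem_nhds hp) hsum)]
    exact VF_const β m p c
  rw [bo1, bo2, comm1 p hp, comm2 p hp]
  linear_combination 2 * VF β m f p * step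

/-- If `Δ_H f = c` on an open set `Ω ⊆ ℝ³` and `f` is `C³` on `Ω`, then
`Δ_H(|∇̃_H f|²) = 2 Σ_{i=1}^{2} |∇̃_H(Xᵢ f)|² ≥ 0` on `Ω`: the right carré du champ of `f`
is `Δ_H`-subharmonic. -/
theorem right_carre_du_champ_subharmonic (Ω : Set (ℝ × ℝ × ℝ)) (hΩ : IsOpen Ω)
    (f : ℝ × ℝ × ℝ → ℝ) (hf : ContDiffOn ℝ 3 f Ω) (c : ℝ)
    (hlap : ∀ p ∈ Ω, lapH f p = c) :
    ∀ p ∈ Ω,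
      lapH (gammaR f) p
        = 2 * (((X1r (X1 f) p) ^ 2 + (X2r (X1 f) p) ^ 2)
             + ((X1r (X2 f) p) ^ 2 + (X2r (X2 f) p) ^ 2)) ∧
      0 ≤ lapH (gammaR f) p := by
  intro p hp
  have hC3 : ∀ q ∈ Ω, ContDiffAt ℝ 3 f q := fun q hq => hf.contDiffAt (hΩ.mem_nhds hq)
  -- the two right fields as VF data
  have hm3_1 : lX1r e3 = 0 := by simp [lX1r, Ly, e3]
  have hm3_2 : lX2r e3 = 0 := by simp [lX2r, Lx, e3]
  have hm1_1 : lX1r e1 = lX1 e1 := by simp [lX1r, lX1, Ly, e1]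
  have hm2_1 : lX1r e2 = lX2 e1 := by
    simp [lX1r, lX2, Ly, Lx, e1, e2]
  have hm1_2 : lX2r e1 = lX1 e2 := by
    simp [lX2r, lX1, Ly, Lx, e1, e2]
  have hm2_2 : lX2r e2 = lX2 e2 := by simp [lX2r, lX2, Lx, e2]
  have key1 := key_j Ω hΩ f hf c hlap e1 lX1r hm3_1 hm1_1 hm2_1 hp
  have key2 := key_j Ω hΩ f hf c hlap e2 lX2r hm3_2 hm1_2 hm2_2 hp
  -- rewrite gammaR f as a sum of two squares of VFs
  have hgam : gammaR f
      = fun q => (fun q' => (VF e1 lX1r f q') ^ 2) q + (fun q' => (VF e2 lX2r f q') ^ 2) q := by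
    funext q
    show (X1r f q) ^ 2 + (X2r f q) ^ 2 = _
    rw [X1r_eq_s5 f, X2r_eq_s5 f]
  -- C2 of the right first derivatives, and differentiability facts
  have hg1C2 : ∀ q ∈ Ω, ContDiffAt ℝ 2 (VF e1 lX1r f) q :=
    fun q hq => contDiffAt_VF e1 lX1r (hC3 q hq) (by norm_num)
  have hg2C2 : ∀ q ∈ Ω, ContDiffAt ℝ 2 (VF e2 lX2r f) q :=
    fun q hq => contDiffAt_VF e2 lX2r (hC3 q hq) (by norm_num)
  have hsq1C2 : ∀ q ∈ Ω, ContDiffAt ℝ 2 (fun q' => (VF e1 lX1r f q') ^ 2) q :=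
    fun q hq => (hg1C2 q hq).pow 2
  have hsq2C2 : ∀ q ∈ Ω, ContDiffAt ℝ 2 (fun q' => (VF e2 lX2r f q') ^ 2) q :=
    fun q hq => (hg2C2 q hq).pow 2
  -- split the Laplacian of the sum of the two squares
  have split : ∀ (α : V3) (l : V3 →L[ℝ] ℝ), l e3 = 0 →
      VF α l (VF α l (gammaR f)) p
        = VF α l (VF α l (fun q => (VF e1 lX1r f q) ^ 2)) p
          + VF α l (VF α l (fun q => (VF e2 lX2r f q) ^ 2)) p := by
    intro α l _
    have inner : ∀ q ∈ Ω, VF α l (gammaR f) q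
        = VF α l (fun q' => (VF e1 lX1r f q') ^ 2) q
          + VF α l (fun q' => (VF e2 lX2r f q') ^ 2) q := by
      intro q hq
      rw [hgam]
      exact VF_add α l ((hsq1C2 q hq).differentiableAt (by norm_num))
        ((hsq2C2 q hq).differentiableAt (by norm_num))
    have hd1 : DifferentiableAt ℝ (VF α l (fun q' => (VF e1 lX1r f q') ^ 2)) p := by
      have : ContDiffAt ℝ 1 (VF α l (fun q' => (VF e1 lX1r f q') ^ 2)) p :=
        contDiffAt_VF α l (hsq1C2 p hp) (by norm_num)
      exact this.differentiableAt (by norm_num)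
    have hd2 : DifferentiableAt ℝ (VF α l (fun q' => (VF e2 lX2r f q') ^ 2)) p := by
      have : ContDiffAt ℝ 1 (VF α l (fun q' => (VF e2 lX2r f q') ^ 2)) p :=
        contDiffAt_VF α l (hsq2C2 p hp) (by norm_num)
      exact this.differentiableAt (by norm_num)
    rw [VF_congr α l (Filter.eventuallyEq_of_mem (hΩ.mem_nhds hp) inner)]
    exact VF_add α l hd1 hd2
  -- express the Laplacian of gammaR f
  have hlapG : lapH (gammaR f) p
      = VF e1 lX1 (VF e1 lX1 (gammaR f)) p + VF e2 lX2 (VF e2 lX2 (gammaR f)) p := by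
    show X1 (X1 (gammaR f)) p + X2 (X2 (gammaR f)) p = _
    rw [X1_eq_s5 (gammaR f), X1_eq_s5 (VF e1 lX1 (gammaR f)),
      X2_eq_s5 (gammaR f), X2_eq_s5 (VF e2 lX2 (gammaR f))]
  have main : lapH (gammaR f) p
      = 2 * (((X1r (X1 f) p) ^ 2 + (X2r (X1 f) p) ^ 2)
           + ((X1r (X2 f) p) ^ 2 + (X2r (X2 f) p) ^ 2)) := by
    rw [hlapG, split e1 lX1 lX1_e3, split e2 lX2 lX2_e3,
      X1r_eq_s5 (X1 f), X2r_eq_s5 (X1 f), X1r_eq_s5 (X2 f), X2r_eq_s5 (X2 f),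
      X1_eq_s5 f, X2_eq_s5 f]
    linear_combination key1 + key2
  refine ⟨main, ?_⟩
  rw [main]
  positivity
end
end

section
/- The polynomials P₁(x,y,σ) = x, P₃(x,y,σ) = 6yσ − x³ and P₅(x,y,σ) = xσ² − (1/8)xy⁴ + (1/3)y³σ − (1/40)x⁵ are solid harmonics of the Heisenberg group ℍ¹: they satisfy Δ_H Pᵢ = 0 on all of ℝ³ for i = 1, 3, 5, and they are homogeneous of degrees 1, 3, 5 respectively with respect to the group dilations, i.e., Pᵢ(λx, λy, λ²σ) = λⁱ Pᵢ(x,y,σ) for all λ > 0 and all (x,y,σ) ∈ ℝ³. -/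
noncomputable section

/-- The solid harmonic `P₁(x,y,σ) = x`. -/
def P1 : ℝ × ℝ × ℝ → ℝ := fun p => p.1

/-- The solid harmonic `P₃(x,y,σ) = 6yσ − x³`. -/
def P3 : ℝ × ℝ × ℝ → ℝ := fun p => 6 * p.2.1 * p.2.2 - p.1 ^ 3

/-- The solid harmonic `P₅(x,y,σ) = xσ² − (1/8)xy⁴ + (1/3)y³σ − (1/40)x⁵`. -/
def P5 : ℝ × ℝ × ℝ → ℝ := fun p =>
  p.1 * p.2.2 ^ 2 - (1 / 8) * p.1 * p.2.1 ^ 4 + (1 / 3) * p.2.1 ^ 3 * p.2.2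
    - (1 / 40) * p.1 ^ 5


lemma X1_eval {f : ℝ×ℝ×ℝ→ℝ} {L : ℝ×ℝ×ℝ →L[ℝ] ℝ} {p : ℝ×ℝ×ℝ} (h : HasFDerivAt f L p) :
    X1 f p = L (1,0,0) - p.2.1/2 * L (0,0,1) := by
  simp [X1, Dx, Ds, h.fderiv]

lemma X2_eval {f : ℝ×ℝ×ℝ→ℝ} {L : ℝ×ℝ×ℝ →L[ℝ] ℝ} {p : ℝ×ℝ×ℝ} (h : HasFDerivAt f L p) :
    X2 f p = L (0,1,0) + p.1/2 * L (0,0,1) := by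
  simp [X2, Dy, Ds, h.fderiv]

lemma hx' (p : ℝ×ℝ×ℝ) :
    HasFDerivAt (fun q : ℝ×ℝ×ℝ => q.1) (ContinuousLinearMap.fst ℝ ℝ (ℝ×ℝ)) p := hasFDerivAt_fst

lemma h2' (p : ℝ×ℝ×ℝ) :
    HasFDerivAt (fun q : ℝ×ℝ×ℝ => q.2) (ContinuousLinearMap.snd ℝ ℝ (ℝ×ℝ)) p := hasFDerivAt_snd

lemma X1P1 : X1 P1 = fun _ => (1:ℝ) := by
  funext p; rw [show P1 = fun q : ℝ×ℝ×ℝ => q.1 from rfl, X1_eval (hx' p)]; simp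

lemma X2P1 : X2 P1 = fun _ => (0:ℝ) := by
  funext p; rw [show P1 = fun q : ℝ×ℝ×ℝ => q.1 from rfl, X2_eval (hx' p)]; simp

lemma lapH_P1 (p : ℝ×ℝ×ℝ) : lapH P1 p = 0 := by
  rw [lapH, X1P1, X2P1, X1_eval (hasFDerivAt_const (1:ℝ) p),
    X2_eval (hasFDerivAt_const (0:ℝ) p)]
  simp

lemma P3form : P3 = fun q : ℝ×ℝ×ℝ => 6*q.2.1*q.2.2 - q.1*(q.1*q.1) :=
  funext fun q => by simp [P3]; ring

lemma X1P3 : X1 P3 = fun q => -(3*(q.1*q.1)) - 3*(q.2.1*q.2.1) := by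
  funext p
  have hy := (h2' p).fst; have hs := (h2' p).snd
  erw [P3form, X1_eval (((hy.const_mul (6:ℝ)).mul hs).sub ((hx' p).mul ((hx' p).mul (hx' p))))]
  simp; ring

lemma X2P3 : X2 P3 = fun q => 6*q.2.2 + 3*(q.1*q.2.1) := by
  funext p
  have hy := (h2' p).fst; have hs := (h2' p).snd
  erw [P3form, X2_eval (((hy.const_mul (6:ℝ)).mul hs).sub ((hx' p).mul ((hx' p).mul (hx' p))))]
  simp; ring

lemma lapH_P3 (p : ℝ×ℝ×ℝ) : lapH P3 p = 0 := by
  have hy := (h2' p).fst; have hs := (h2' p).snd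
  have hg1 := ((((hx' p).mul (hx' p)).const_mul (3:ℝ)).neg).sub ((hy.mul hy).const_mul (3:ℝ))
  have hg2 := (hs.const_mul (6:ℝ)).add (((hx' p).mul hy).const_mul (3:ℝ))
  erw [lapH, X1P3, X2P3, X1_eval hg1, X2_eval hg2]
  simp; ring

lemma P5form : P5 = fun q : ℝ×ℝ×ℝ =>
    q.1*(q.2.2*q.2.2) - (1/8)*(q.1*(q.2.1*(q.2.1*(q.2.1*q.2.1))))
      + (1/3)*((q.2.1*(q.2.1*q.2.1))*q.2.2) - (1/40)*(q.1*(q.1*(q.1*(q.1*q.1)))) :=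
  funext fun q => by simp [P5]; ring

lemma X1P5 : X1 P5 = fun q =>
    q.2.2*q.2.2 - (7/24)*(q.2.1*(q.2.1*(q.2.1*q.2.1)))
      - (1/8)*(q.1*(q.1*(q.1*q.1))) - q.1*(q.2.1*q.2.2) := by
  funext p
  have hy := (h2' p).fst; have hs := (h2' p).snd; have hx := hx' p
  have hf := (((hx.mul (hs.mul hs)).sub
      ((hx.mul (hy.mul (hy.mul (hy.mul hy)))).const_mul (1/8))).add
      (((hy.mul (hy.mul hy)).mul hs).const_mul (1/3))).sub
      ((hx.mul (hx.mul (hx.mul (hx.mul hx)))).const_mul (1/40))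
  erw [P5form, X1_eval hf]
  simp; ring

lemma X2P5 : X2 P5 = fun q =>
    (q.1*q.1)*q.2.2 + (q.2.1*q.2.1)*q.2.2 - (1/3)*(q.1*(q.2.1*(q.2.1*q.2.1))) := by
  funext p
  have hy := (h2' p).fst; have hs := (h2' p).snd; have hx := hx' p
  have hf := (((hx.mul (hs.mul hs)).sub
      ((hx.mul (hy.mul (hy.mul (hy.mul hy)))).const_mul (1/8))).add
      (((hy.mul (hy.mul hy)).mul hs).const_mul (1/3))).sub
      ((hx.mul (hx.mul (hx.mul (hx.mul hx)))).const_mul (1/40))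
  erw [P5form, X2_eval hf]
  simp; ring

lemma lapH_P5 (p : ℝ×ℝ×ℝ) : lapH P5 p = 0 := by
  have hy := (h2' p).fst; have hs := (h2' p).snd; have hx := hx' p
  have hg1 := (((hs.mul hs).sub
      ((hy.mul (hy.mul (hy.mul hy))).const_mul (7/24))).sub
      ((hx.mul (hx.mul (hx.mul hx))).const_mul (1/8))).sub (hx.mul (hy.mul hs))
  have hg2 := (((hx.mul hx).mul hs).add ((hy.mul hy).mul hs)).sub
      ((hx.mul (hy.mul (hy.mul hy))).const_mul (1/3))
  erw [lapH, X1P5, X2P5, X1_eval hg1, X2_eval hg2]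
  simp; ring

/-- `P₁, P₃, P₅` are solid harmonics of `ℍ¹`: they are `Δ_H`-harmonic on all of `ℝ³`
and homogeneous of degrees `1, 3, 5` with respect to the group dilations
`δ_λ(x,y,σ) = (λx, λy, λ²σ)`. -/
theorem solid_harmonics :
    (∀ p : ℝ × ℝ × ℝ, lapH P1 p = 0 ∧ lapH P3 p = 0 ∧ lapH P5 p = 0) ∧
    (∀ l : ℝ, 0 < l → ∀ p : ℝ × ℝ × ℝ,
      P1 (l * p.1, l * p.2.1, l ^ 2 * p.2.2) = l ^ 1 * P1 p ∧
      P3 (l * p.1, l * p.2.1, l ^ 2 * p.2.2) = l ^ 3 * P3 p ∧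
      P5 (l * p.1, l * p.2.1, l ^ 2 * p.2.2) = l ^ 5 * P5 p) := by
  constructor
  · intro p
    exact ⟨lapH_P1 p, lapH_P3 p, lapH_P5 p⟩
  · intro l _ p
    refine ⟨by simp [P1], by simp [P3]; ring, by simp [P5]; ring⟩
end
end
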